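/- arXiv:1009.3051 — 7 statements merged into one kernel-verified Lean document; each statement's English description precedes it below -/
import Mathlib

section
/- For state vectors |ψ⟩ and |φ⟩ in ℂ²⊗ℂ², the operator (⟨ψ| ⊗ 1)(1 ⊗ |φ⟩) : ℂ² → ℂ² equals zero only if both |ψ⟩ and |φ⟩ are product states (i.e., have tensor rank at most 1). -/
/-!
Write the coefficients of `ψ` and `φ` as 2 × 2 matrices `A` and `B`; the hypothesis says that the
entrywise conjugate `Ā` satisfies `Ā * B = 0`. Normalised states give `A ≠ 0` and `B ≠ 0`, so
neither factor is invertible: `det A = det B = 0`. A singular 2 × 2 matrix is an outer product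
`a bᵀ`, i.e. a product state.
-/

/-- A vector in `ℂ² ⊗ ℂ²` (written in coordinates) is a product state if its
coefficients factorize as `ψ (i,j) = a i * b j`. -/
def IsProd2 (ψ : Fin 2 × Fin 2 → ℂ) : Prop :=
  ∃ a b : Fin 2 → ℂ, ∀ i j : Fin 2, ψ (i, j) = a i * b j

namespace Matrix

variable {K : Type*} [Field K]

theorem exists_eq_vecMulVec_of_det_eq_zero {M : Matrix (Fin 2) (Fin 2) K} (h : M.det = 0) :
    ∃ a b : Fin 2 → K, M = vecMulVec a b := by
  rw [det_fin_two] at h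
  by_cases h00 : M 0 0 = 0
  · by_cases h01 : M 0 1 = 0
    · refine ⟨![0, 1], M 1, ?_⟩
      ext i j; fin_cases i <;> fin_cases j <;> simp [vecMulVec_apply, h00, h01]
    · have h10 : M 1 0 = 0 := by simpa [h00, h01] using h
      refine ⟨fun i => M i 1, ![0, 1], ?_⟩
      ext i j; fin_cases i <;> fin_cases j <;> simp [vecMulVec_apply, h00, h10]
  · refine ⟨fun i => M i 0, ![1, M 0 1 / M 0 0], ?_⟩
    ext i j
    fin_cases i <;> fin_cases j <;> simp [vecMulVec_apply, field]
    linear_combination h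

variable {n : Type*} [Fintype n] [DecidableEq n]

theorem det_eq_zero_of_mul_eq_zero_of_ne_zero_right {M N : Matrix n n K} (h : M * N = 0)
    (hN : N ≠ 0) : M.det = 0 := by
  by_contra hM
  exact hN (((isUnit_iff_isUnit_det M).mpr (isUnit_iff_ne_zero.mpr hM)).mul_right_eq_zero.mp h)

theorem det_eq_zero_of_mul_eq_zero_of_ne_zero_left {M N : Matrix n n K} (h : M * N = 0)
    (hM : M ≠ 0) : N.det = 0 := by
  by_contra hN
  exact hM (((isUnit_iff_isUnit_det N).mpr (isUnit_iff_ne_zero.mpr hN)).mul_left_eq_zero.mp h)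

end Matrix

open Matrix

theorem isProd2_of_det_eq_zero {ψ : Fin 2 × Fin 2 → ℂ} (h : (of (Function.curry ψ)).det = 0) :
    IsProd2 ψ := by
  obtain ⟨a, b, hab⟩ := exists_eq_vecMulVec_of_det_eq_zero h
  exact ⟨a, b, fun i j => by simpa [vecMulVec_apply] using congrFun₂ hab i j⟩

theorem of_curry_ne_zero_of_sum_normSq_eq_one {ι : Type*} [Fintype ι] {ψ : ι × ι → ℂ}
    (h : ∑ x, Complex.normSq (ψ x) = 1) : of (Function.curry ψ) ≠ 0 := by
  intro h0
  have : ψ = 0 := funext fun x => by simpa using congrFun₂ h0 x.1 x.2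
  simp [this] at h

/-- For state vectors `ψ`, `φ` in `ℂ²⊗ℂ²`, the operator `(⟨ψ| ⊗ 1)(1 ⊗ |φ⟩) : ℂ² → ℂ²`,
whose matrix entry at `(k, i)` is `∑ j, star (ψ (i,j)) * φ (j,k)`, vanishes only if
both `ψ` and `φ` are product states. -/
theorem stmt0 (ψ φ : Fin 2 × Fin 2 → ℂ)
    (hψ : ∑ x : Fin 2 × Fin 2, Complex.normSq (ψ x) = 1)
    (hφ : ∑ x : Fin 2 × Fin 2, Complex.normSq (φ x) = 1)
    (h : ∀ i k : Fin 2, ∑ j : Fin 2, star (ψ (i, j)) * φ (j, k) = 0) :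
    IsProd2 ψ ∧ IsProd2 φ := by
  set A := of (Function.curry ψ)
  set B := of (Function.curry φ)
  have hAB : Aᴴᵀ * B = 0 := by
    ext i k
    simpa [mul_apply, A, B] using h i k
  have hdetA : A.det = 0 := by
    rw [← star_eq_zero, ← det_conjTranspose, ← det_transpose]
    exact det_eq_zero_of_mul_eq_zero_of_ne_zero_right hAB
      (of_curry_ne_zero_of_sum_normSq_eq_one hφ)
  have hdetB : B.det = 0 := by
    refine det_eq_zero_of_mul_eq_zero_of_ne_zero_left hAB ?_
    simpa using of_curry_ne_zero_of_sum_normSq_eq_one hψ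
  exact ⟨isProd2_of_det_eq_zero hdetA, isProd2_of_det_eq_zero hdetB⟩
end

section
/- Let U : ℂ² → ℂ²⊗ℂ² be an isometry which is not a product operator, let η be a positive semidefinite operator on ℂ²⊗ℂ², and set η' = (U† ⊗ 1)(1 ⊗ η)(U ⊗ 1), an operator on ℂ²⊗ℂ². If η' does not have full rank, then η' is a product operator if and only if η is a product operator. -/
open Matrix
open scoped ComplexOrder

/-- An operator on `ℂ²⊗ℂ²` is a product operator if it is of the form `A ⊗ B`. -/
def IsProdOp (η : Matrix (Fin 2 × Fin 2) (Fin 2 × Fin 2) ℂ) : Prop :=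
  ∃ A B : Matrix (Fin 2) (Fin 2) ℂ, ∀ i j k l : Fin 2, η (i, j) (k, l) = A i k * B j l

/-- An isometry `U : ℂ² → ℂ²⊗ℂ²` is a product operator if `U = A ⊗ |v⟩` or `U = |u⟩ ⊗ A`. -/
def IsProdIsometry (U : Matrix (Fin 2 × Fin 2) (Fin 2) ℂ) : Prop :=
  (∃ (A : Matrix (Fin 2) (Fin 2) ℂ) (v : Fin 2 → ℂ), ∀ i j k : Fin 2, U (i, j) k = A i k * v j) ∨
  (∃ (u : Fin 2 → ℂ) (A : Matrix (Fin 2) (Fin 2) ℂ), ∀ i j k : Fin 2, U (i, j) k = u i * A j k)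

/-!
Write `U_a = (⟨a| ⊗ 1) U`, so that `η' = ∑ₐ (U_a ⊗ 1)† η (U_a ⊗ 1)`; this makes `η = A ⊗ B ⇒
η' = (∑ₐ U_a† A U_a) ⊗ B` immediate. Conversely, if `η' = A' ⊗ B'` is singular then `A'` or `B'`
is singular, and as `η ≥ 0`, every `x ∈ ker η'` gives `(U_a ⊗ 1) x ∈ ker η` for all `a`.
* If `A' u = 0`, then `U_a u ⊗ c ∈ ker η` for all `c`, and `U_a u ≠ 0` for some `a` because `U`
  is an isometry.
* If `B' w = 0`, then `U_a c ⊗ w ∈ ker η` for all `a, c`, and the vectors `U_a c` span `ℂ²`,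
  since otherwise `U = A ⊗ |v⟩`.
In both cases the kernel of `η = M†M` contains `w ⊗ ℂ²` (or `ℂ² ⊗ w`) for some `w ≠ 0`, so each
column block of `M` is a multiple of the vector `w^⊥`, which makes `η = |w^⊥⟩⟨w^⊥| ⊗ B`.
-/

open scoped Kronecker

namespace Matrix

variable {l m n k ι R K 𝕜 : Type*}

section kroneckerVec

variable [CommSemiring R]

def kroneckerVec : (m → R) →ₗ[R] (n → R) →ₗ[R] (m × n → R) :=
  LinearMap.mk₂ R (fun v w i => v i.1 * w i.2)
    (fun _ _ _ => funext fun _ => add_mul _ _ _) (fun _ _ _ => funext fun _ => mul_assoc _ _ _)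
    (fun _ _ _ => funext fun _ => mul_add _ _ _) (fun _ _ _ => funext fun _ => mul_left_comm _ _ _)

@[simp]
lemma kroneckerVec_apply (v : m → R) (w : n → R) (i : m × n) :
    kroneckerVec v w i = v i.1 * w i.2 :=
  rfl

lemma kronecker_mulVec_kroneckerVec [Fintype m] [Fintype n] (A : Matrix l m R)
    (B : Matrix k n R) (v : m → R) (w : n → R) :
    (A ⊗ₖ B) *ᵥ kroneckerVec v w = kroneckerVec (A *ᵥ v) (B *ᵥ w) := by
  ext ⟨i, j⟩
  simp only [mulVec, dotProduct, kroneckerVec_apply, kroneckerMap_apply, Fintype.sum_prod_type,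
    Finset.sum_mul_sum]
  exact Finset.sum_congr rfl fun _ _ => Finset.sum_congr rfl fun _ _ => mul_mul_mul_comm _ _ _ _

end kroneckerVec

/-- The block `(⟨a| ⊗ 1) U` of a matrix whose rows are indexed by a product. -/
def slice (U : Matrix (m × n) k R) (a : m) : Matrix n k R :=
  U.submatrix (Prod.mk a) id

lemma conjTranspose_mul_self_eq_sum_slice [Fintype m] [Fintype n] [NonUnitalSemiring R]
    [StarRing R] (U : Matrix (m × n) k R) :
    Uᴴ * U = ∑ a, (U.slice a)ᴴ * U.slice a := by
  ext p q
  simp [slice, mul_apply, Fintype.sum_prod_type, Matrix.sum_apply]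

lemma exists_slice_mulVec_ne_zero [Fintype m] [Fintype n] [Fintype k] [DecidableEq k] [Semiring R]
    [StarRing R] {U : Matrix (m × n) k R} (hU : Uᴴ * U = 1) {u : k → R} (hu : u ≠ 0) :
    ∃ a, U.slice a *ᵥ u ≠ 0 := by
  by_contra! h
  apply hu
  calc u = (Uᴴ * U) *ᵥ u := by rw [hU, one_mulVec]
    _ = ∑ a, (U.slice a)ᴴ *ᵥ (U.slice a *ᵥ u) := by
      rw [conjTranspose_mul_self_eq_sum_slice, sum_mulVec]
      simp only [mulVec_mulVec]
    _ = 0 := by simp [h]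

lemma det_eq_zero_or_det_eq_zero_of_rank_kronecker_lt [Fintype m] [Fintype n] [DecidableEq m]
    [DecidableEq n] [Field K] {A : Matrix m m K} {B : Matrix n n K}
    (h : (A ⊗ₖ B).rank < Fintype.card (m × n)) : A.det = 0 ∨ B.det = 0 := by
  by_contra! hAB
  refine h.ne (rank_of_isUnit _ ?_)
  rw [isUnit_iff_isUnit_det, det_kronecker]
  exact (hAB.1.isUnit.pow _).mul (hAB.2.isUnit.pow _)

lemma eq_sum_slice_kronecker_of_apply [Fintype m] [Fintype n] [Fintype l] [DecidableEq l]
    [CommSemiring R] [StarRing R] {U : Matrix (m × n) k R} {η : Matrix (n × l) (n × l) R}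
    {η' : Matrix (k × l) (k × l) R}
    (hη' : ∀ p r q s, η' (p, r) (q, s) =
      ∑ a, ∑ b, ∑ d, star (U (a, b) p) * η (b, r) (d, s) * U (a, d) q) :
    -- without the ascriptions, `1` elaborates as a `CStarMatrix` and `mul_apply` no longer applies
    η' = ∑ a, (U.slice a ⊗ₖ (1 : Matrix l l R))ᴴ * η * (U.slice a ⊗ₖ (1 : Matrix l l R)) := by
  ext ⟨p, r⟩ ⟨q, s⟩
  simp [hη', sum_apply, mul_apply, Fintype.sum_prod_type, slice, one_apply, Finset.sum_mul,
    apply_ite star]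
  exact Finset.sum_congr rfl fun _ _ => Finset.sum_comm

lemma exists_eq_smul_of_dotProduct_eq_zero [Field K] {f w : Fin 2 → K} (hw : w ≠ 0)
    (h : f ⬝ᵥ w = 0) : ∃ t : K, f = t • ![w 1, -w 0] := by
  rw [dotProduct, Fin.sum_univ_two] at h
  by_cases h0 : w 0 = 0
  · have h1 : w 1 ≠ 0 := fun h1 => hw (funext fun i => by fin_cases i <;> assumption)
    refine ⟨f 0 / w 1, funext fun i => ?_⟩
    fin_cases i
    · simp [h1]
    · simpa [h0, h1] using h
  · refine ⟨-f 1 / w 0, funext fun i => ?_⟩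
    fin_cases i
    · simp only [Fin.zero_eta, Pi.smul_apply, Matrix.cons_val_zero, smul_eq_mul]
      field_simp
      linear_combination h
    · simp [h0]

lemma conjTranspose_mul_self_eq_kronecker [Fintype l] [CommSemiring R] [StarRing R]
    (M : Matrix l (m × n) R) (s : m → R) (t : Matrix l n R)
    (h : ∀ j b r, M j (b, r) = s b * t j r) :
    Mᴴ * M = vecMulVec (star s) s ⊗ₖ (tᴴ * t) := by
  ext ⟨b, r⟩ ⟨d, u⟩
  simp only [mul_apply, conjTranspose_apply, h, kroneckerMap_apply, vecMulVec_apply, Pi.star_apply,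
    star_mul', Finset.mul_sum]
  exact Finset.sum_congr rfl fun _ _ => by ring

namespace PosSemidef

variable [RCLike 𝕜] [Fintype m] [Fintype n]

lemma mulVec_mulVec_eq_zero_of_sum_mulVec_eq_zero [Fintype ι] {η : Matrix m m 𝕜}
    (hη : η.PosSemidef) (K : ι → Matrix m n 𝕜) {x : n → 𝕜}
    (hx : (∑ a, (K a)ᴴ * η * K a) *ᵥ x = 0) (a : ι) : η *ᵥ (K a *ᵥ x) = 0 := by
  have hsum : ∑ a, star (K a *ᵥ x) ⬝ᵥ η *ᵥ (K a *ᵥ x) = 0 := by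
    have := congrArg (star x ⬝ᵥ ·) hx
    simp only [sum_mulVec, dotProduct_sum, dotProduct_zero] at this
    simpa only [star_mulVec, dotProduct_mulVec, vecMul_vecMul, ← mulVec_mulVec] using this
  refine (hη.dotProduct_mulVec_zero_iff _).1 ?_
  exact (Finset.sum_eq_zero_iff_of_nonneg fun a _ => hη.dotProduct_mulVec_nonneg _).1 hsum a
    (Finset.mem_univ a)

lemma exists_eq_kronecker_of_mulVec_kroneckerVec_left_eq_zero
    {η : Matrix (Fin 2 × n) (Fin 2 × n) 𝕜} (hη : η.PosSemidef) {w : Fin 2 → 𝕜} (hw : w ≠ 0)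
    (h : ∀ c, η *ᵥ kroneckerVec w c = 0) :
    ∃ (A : Matrix (Fin 2) (Fin 2) 𝕜) (B : Matrix n n 𝕜), η = A ⊗ₖ B := by
  classical
  obtain ⟨M, rfl⟩ : ∃ M : Matrix (Fin 2 × n) (Fin 2 × n) 𝕜, η = star M * M := by
    open scoped MatrixOrder in
    exact CStarAlgebra.nonneg_iff_eq_star_mul_self.mp hη.nonneg
  have hcol : ∀ j r, ∃ t : 𝕜, (fun b => M j (b, r)) = t • ![w 1, -w 0] := by
    intro j r
    refine exists_eq_smul_of_dotProduct_eq_zero hw ?_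
    have := congrFun ((conjTranspose_mul_self_mulVec_eq_zero _ _).1 (h (Pi.single r 1))) j
    simpa [mulVec, dotProduct, Fintype.sum_prod_type, Pi.single_apply, mul_comm] using this
  choose t ht using hcol
  exact ⟨_, _, conjTranspose_mul_self_eq_kronecker M ![w 1, -w 0] (Matrix.of t)
    fun j b r => by simpa [mul_comm] using congrFun (ht j r) b⟩

lemma exists_eq_kronecker_of_mulVec_kroneckerVec_right_eq_zero
    {η : Matrix (n × Fin 2) (n × Fin 2) 𝕜} (hη : η.PosSemidef) {w : Fin 2 → 𝕜} (hw : w ≠ 0)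
    (h : ∀ c, η *ᵥ kroneckerVec c w = 0) :
    ∃ (A : Matrix n n 𝕜) (B : Matrix (Fin 2) (Fin 2) 𝕜), η = A ⊗ₖ B := by
  let e := Equiv.prodComm (Fin 2) n
  have hswap : ∀ c, η.submatrix e e *ᵥ kroneckerVec w c = 0 := fun c => by
    have hcomm : kroneckerVec w c ∘ e.symm = kroneckerVec c w := funext fun _ => mul_comm _ _
    rw [submatrix_mulVec_equiv, hcomm, h]
    rfl
  obtain ⟨A, B, hAB⟩ :=
    exists_eq_kronecker_of_mulVec_kroneckerVec_left_eq_zero (hη.submatrix e) hw hswap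
  refine ⟨B, A, ?_⟩
  ext ⟨i, j⟩ ⟨k, l⟩
  simpa [e, mul_comm] using congrFun (congrFun hAB (j, i)) (l, k)

end PosSemidef

end Matrix

open Matrix

lemma isProdOp_iff_exists_kronecker (η : Matrix (Fin 2 × Fin 2) (Fin 2 × Fin 2) ℂ) :
    IsProdOp η ↔ ∃ A B : Matrix (Fin 2) (Fin 2) ℂ, η = A ⊗ₖ B :=
  exists₂_congr fun _ _ =>
    ⟨fun h => ext fun ⟨i, j⟩ ⟨k, l⟩ => h i j k l, fun h i j k l => by rw [h]; rfl⟩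

lemma iSup_range_mulVecLin_slice_eq_top_of_not_isProdIsometry {U : Matrix (Fin 2 × Fin 2) (Fin 2) ℂ}
    (hU : ¬ IsProdIsometry U) : ⨆ a, LinearMap.range (U.slice a).mulVecLin = ⊤ := by
  by_contra h
  have hrank := Submodule.finrank_lt h
  rw [Module.finrank_fin_fun] at hrank
  obtain ⟨v, hv⟩ := ((Submodule.finrank_le_one_iff_isPrincipal
    (⨆ a, LinearMap.range (U.slice a).mulVecLin)).1 (by omega)).principal
  have hcol : ∀ a p, ∃ c : ℂ, c • v = fun b => U (a, b) p := fun a p => by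
    refine Submodule.mem_span_singleton.1 (hv ▸ Submodule.mem_iSup_of_mem a ?_)
    exact ⟨Pi.single p 1, funext fun b => by simp [slice]⟩
  choose A hA using hcol
  exact hU (Or.inl ⟨A, v, fun a b p => by simpa using (congrFun (hA a p) b).symm⟩)

/-- Let `U : ℂ² → ℂ²⊗ℂ²` be an isometry which is not a product operator, `η ≥ 0` on
`ℂ²⊗ℂ²`, and `η' = (U† ⊗ 1)(1 ⊗ η)(U ⊗ 1)` (where `U` produces qubits 1, 2, `η` acts
on qubits 2, 3).  If `η'` is not of full rank, then `η'` is a product operator iff `η` is. -/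
theorem stmt2 (U : Matrix (Fin 2 × Fin 2) (Fin 2) ℂ)
    (hU : Uᴴ * U = 1) (hUnp : ¬ IsProdIsometry U)
    (η : Matrix (Fin 2 × Fin 2) (Fin 2 × Fin 2) ℂ) (hη : η.PosSemidef)
    (η' : Matrix (Fin 2 × Fin 2) (Fin 2 × Fin 2) ℂ)
    (hη' : ∀ p r q s : Fin 2, η' (p, r) (q, s) =
      ∑ a : Fin 2, ∑ b : Fin 2, ∑ d : Fin 2,
        star (U (a, b) p) * η (b, r) (d, s) * U (a, d) q)
    (hrank : η'.rank < 4) :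
    IsProdOp η' ↔ IsProdOp η := by
  have hη'_eq := eq_sum_slice_kronecker_of_apply hη'
  rw [isProdOp_iff_exists_kronecker, isProdOp_iff_exists_kronecker]
  constructor
  · rintro ⟨A', B', rfl⟩
    have hker : ∀ x, (A' ⊗ₖ B') *ᵥ x = 0 → ∀ a,
        η *ᵥ ((U.slice a ⊗ₖ (1 : Matrix (Fin 2) (Fin 2) ℂ)) *ᵥ x) = 0 := fun x hx =>
      hη.mulVec_mulVec_eq_zero_of_sum_mulVec_eq_zero _ (hη'_eq ▸ hx)
    rcases det_eq_zero_or_det_eq_zero_of_rank_kronecker_lt (hrank.trans_eq (by simp)) with hA' | hB'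
    · obtain ⟨u, hu, hA'u⟩ := exists_mulVec_eq_zero_iff.2 hA'
      obtain ⟨a, ha⟩ := exists_slice_mulVec_ne_zero hU hu
      refine hη.exists_eq_kronecker_of_mulVec_kroneckerVec_left_eq_zero ha fun c => ?_
      simpa [kronecker_mulVec_kroneckerVec] using
        hker (kroneckerVec u c) (by simp [kronecker_mulVec_kroneckerVec, hA'u]) a
    · obtain ⟨w, hw, hB'w⟩ := exists_mulVec_eq_zero_iff.2 hB'
      refine hη.exists_eq_kronecker_of_mulVec_kroneckerVec_right_eq_zero hw fun v => ?_
      have hle : ⨆ a, LinearMap.range (U.slice a).mulVecLin ≤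
          LinearMap.ker (η.mulVecLin ∘ₗ kroneckerVec.flip w) := iSup_le fun a => by
        rintro _ ⟨c, rfl⟩
        simpa [kronecker_mulVec_kroneckerVec] using
          hker (kroneckerVec c w) (by simp [kronecker_mulVec_kroneckerVec, hB'w]) a
      have hspan := iSup_range_mulVecLin_slice_eq_top_of_not_isProdIsometry hUnp
      simpa using hle (hspan ▸ Submodule.mem_top)
  · rintro ⟨A, B, rfl⟩
    refine ⟨∑ a, (U.slice a)ᴴ * A * U.slice a, B, ?_⟩
    simp only [hη'_eq, conjTranspose_kronecker, conjTranspose_one, ← mul_kronecker_mul, one_mul,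
      mul_one, Fin.sum_univ_two, add_kronecker]
end

section
/- Let |β_{ab}⟩ and |β_{bc}⟩ be vectors in ℂ²⊗ℂ², and let |Ψ⁻⟩ = (|01⟩ − |10⟩)/√2. If a vector |Φ⟩ ∈ (ℂ²)^{⊗3} (on qubits a, b, c) satisfies (⟨β_{ab}| ⊗ 1_c)|Φ⟩ = 0 and (1_a ⊗ ⟨β_{bc}|)|Φ⟩ = 0, then it also satisfies ⟨β'_{ac}|Φ⟩' = 0 for the induced constraint ⟨β'_{ac}| = (⟨β_{ab}| ⊗ ⟨β_{bc}|)(1 ⊗ |Ψ⁻⟩ ⊗ 1), viewed as a functional on qubits a and c applied to any extension of |Φ⟩; concretely, (⟨β'_{ac}| ⊗ 1_b)|Φ⟩ = 0 where ⟨β'_{ac}| acts on qubits a, c. -/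
/-!
In dimension two every alternating form `S` satisfies the Schouten identity
`S j j' v_b = S b j' v_j + S j b v_{j'}` (a tensor antisymmetric in three indices from a
two-element set vanishes). Applied to the middle index of `Φ`, it splits the induced constraint
`∑ A_{ij} S_{jj'} B_{j'k} Φ_{ibk}` into a term in which `A` is contracted with `Φ` over the
indices `(i, j)`, which vanishes by the first constraint, and a term in which `B` is contracted
with `Φ` over `(j', k)`, which vanishes by the second.
-/

/-- The two-qubit singlet state `|Ψ⁻⟩ = (|01⟩ − |10⟩)/√2` in coordinates. -/
noncomputable def singlet : Fin 2 × Fin 2 → ℂ := fun p =>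
  if p = (0, 1) then (((Real.sqrt 2 : ℝ) : ℂ))⁻¹
  else if p = (1, 0) then -(((Real.sqrt 2 : ℝ) : ℂ))⁻¹ else 0

open Finset

theorem Fin.two_schouten {R M : Type*} [Ring R] [AddCommGroup M] [Module R M]
    {S : Fin 2 → Fin 2 → R} (hdiag : ∀ j, S j j = 0) (hanti : ∀ j j', S j j' = -S j' j)
    (v : Fin 2 → M) (j j' b : Fin 2) :
    S j j' • v b = S b j' • v j + S j b • v j' := by
  have h01 := hanti 0 1
  fin_cases j <;> fin_cases j' <;> fin_cases b <;> simp [hdiag, h01, neg_smul]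

theorem singlet_self (j : Fin 2) : singlet (j, j) = 0 := by
  fin_cases j <;> simp [singlet]

theorem singlet_swap (j j' : Fin 2) : singlet (j, j') = -singlet (j', j) := by
  fin_cases j <;> fin_cases j' <;> simp [singlet]

theorem sum_alternating_contraction_mul_eq_zero {R α γ : Type*} [CommRing R]
    [Fintype α] [Fintype γ] {S : Fin 2 → Fin 2 → R} (hdiag : ∀ j, S j j = 0)
    (hanti : ∀ j j', S j j' = -S j' j) (A : α → Fin 2 → R) (B : Fin 2 → γ → R)
    (Φ : α → Fin 2 → γ → R) (hA : ∀ k, ∑ i, ∑ j, A i j * Φ i j k = 0)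
    (hB : ∀ i, ∑ j, ∑ k, B j k * Φ i j k = 0) (b : Fin 2) :
    ∑ i, ∑ k, (∑ j, ∑ j', A i j * S j j' * B j' k) * Φ i b k = 0 := by
  have schouten (i k j j') : S j j' * Φ i b k = S b j' * Φ i j k + S j b * Φ i j' k := by
    simpa only [smul_eq_mul] using Fin.two_schouten hdiag hanti (Φ i · k) j j' b
  have hA_term : ∑ i, ∑ k, ∑ j, ∑ j', A i j * B j' k * (S b j' * Φ i j k) = 0 :=
    calc _ = ∑ k, ∑ j', S b j' * B j' k * ∑ i, ∑ j, A i j * Φ i j k := by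
          simp only [mul_sum]
          exact sum_comm.trans <| sum_congr rfl fun k _ =>
            (sum_congr rfl fun i _ => sum_comm).trans <| sum_comm.trans <|
              sum_congr rfl fun j' _ => sum_congr rfl fun i _ => sum_congr rfl fun j _ => by ring
      _ = 0 := by simp only [hA, mul_zero, sum_const_zero]
  have hB_term : ∑ i, ∑ k, ∑ j, ∑ j', A i j * B j' k * (S j b * Φ i j' k) = 0 :=
    calc _ = ∑ i, ∑ j, S j b * A i j * ∑ j', ∑ k, B j' k * Φ i j' k := by
          simp only [mul_sum]
          exact sum_congr rfl fun i _ => sum_comm.trans <| sum_congr rfl fun j _ =>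
            sum_comm.trans <| sum_congr rfl fun j' _ => sum_congr rfl fun k _ => by ring
      _ = 0 := by simp only [hB, mul_zero, sum_const_zero]
  calc _ = ∑ i, ∑ k, ∑ j, ∑ j', A i j * B j' k * (S j j' * Φ i b k) := by
        simp only [sum_mul]
        exact sum_congr rfl fun i _ => sum_congr rfl fun k _ =>
          sum_congr rfl fun j _ => sum_congr rfl fun j' _ => by ring
    _ = 0 := by simp only [schouten, mul_add, sum_add_distrib, hA_term, hB_term, add_zero]

/-- Constraint induction (Bravyi): if `Φ` on qubits `a, b, c` is annihilated by
`⟨β_ab| ⊗ 1_c` and `1_a ⊗ ⟨β_bc|`, then it is annihilated by the induced constraint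
`⟨β'_ac| = (⟨β_ab| ⊗ ⟨β_bc|)(1 ⊗ |Ψ⁻⟩ ⊗ 1)` acting on qubits `a, c`. -/
theorem stmt6 (βab βbc : Fin 2 × Fin 2 → ℂ) (Φ : Fin 2 × Fin 2 × Fin 2 → ℂ)
    (h1 : ∀ c : Fin 2, ∑ i : Fin 2, ∑ j : Fin 2, star (βab (i, j)) * Φ (i, j, c) = 0)
    (h2 : ∀ a : Fin 2, ∑ j : Fin 2, ∑ k : Fin 2, star (βbc (j, k)) * Φ (a, j, k) = 0) :
    ∀ b : Fin 2, ∑ i : Fin 2, ∑ k : Fin 2,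
      (∑ j : Fin 2, ∑ j' : Fin 2, star (βab (i, j)) * singlet (j, j') * star (βbc (j', k)))
        * Φ (i, b, k) = 0 :=
  sum_alternating_contraction_mul_eq_zero (S := fun j j' => singlet (j, j')) singlet_self
    singlet_swap (fun i j => star (βab (i, j))) (fun j k => star (βbc (j, k)))
    (fun i j k => Φ (i, j, k)) h1 h2
end

section
/- For entangled vectors |β_{ua}⟩, |β_{av}⟩ ∈ ℂ²⊗ℂ² with ⟨β_{ua}| ∝ ⟨Ψ⁻|(L_u ⊗ L_a) and ⟨β_{av}| ∝ ⟨Ψ⁻|(L_a ⊗ L_v) for invertible L_u, L_a, L_v ∈ GL(2,ℂ), the induced constraint ⟨β_{uv}| = (⟨β_{ua}| ⊗ ⟨β_{av}|)(1 ⊗ |Ψ⁻⟩ ⊗ 1) satisfies ⟨β_{uv}| ∝ ⟨Ψ⁻|(L_u ⊗ L_v), with nonzero proportionality constant. -/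
/-!
Write the singlet as `ε / √2` with `ε = !![0, 1; -1, 0]`. As matrices the two constraints are
scalar multiples of `Luᵀ ε La` and `Laᵀ ε Lv`, and contracting the middle legs with the singlet
gives a multiple of `Luᵀ ε (La ε Laᵀ) ε Lv`. For a `2 × 2` matrix `A ε Aᵀ = (det A) ε`, and
`ε² = -1`, so the result is `-(det La) Luᵀ ε Lv`: the middle vertex survives only through its
determinant.
-/

open Matrix

namespace Matrix

section Contraction

variable {l m n o R : Type*} [Fintype m] [Fintype n] [CommSemiring R]

theorem mul_mul_apply_eq_sum (X : Matrix l m R) (B : Matrix m n R) (Y : Matrix n o R)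
    (i : l) (k : o) :
    (X * B * Y) i k = ∑ j, ∑ j', X i j * B j j' * Y j' k := by
  simp only [mul_apply, Finset.sum_mul]
  exact Finset.sum_comm

theorem transpose_mul_mul_apply_eq_sum (M : Matrix m l R) (B : Matrix m n R)
    (N : Matrix n o R) (i : l) (k : o) :
    (Mᵀ * B * N) i k = ∑ p, ∑ q, B p q * M p i * N q k := by
  simp only [mul_mul_apply_eq_sum, transpose_apply, mul_comm (M _ i)]

end Contraction

def epsilon (R : Type*) [CommRing R] : Matrix (Fin 2) (Fin 2) R := !![0, 1; -1, 0]

section Epsilon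

variable {R : Type*} [CommRing R]

theorem epsilon_mul_epsilon : epsilon R * epsilon R = -1 := by
  ext i j
  fin_cases i <;> fin_cases j <;> simp [epsilon]

theorem mul_epsilon_mul_transpose (A : Matrix (Fin 2) (Fin 2) R) :
    A * epsilon R * Aᵀ = A.det • epsilon R := by
  ext i j
  fin_cases i <;> fin_cases j <;> simp [epsilon, det_fin_two, mul_apply, Fin.sum_univ_two] <;> ring

theorem epsilon_contraction (M A N : Matrix (Fin 2) (Fin 2) R) :
    (Mᵀ * epsilon R * A) * epsilon R * (Aᵀ * epsilon R * N) =
      -A.det • (Mᵀ * epsilon R * N) := by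
  calc (Mᵀ * epsilon R * A) * epsilon R * (Aᵀ * epsilon R * N)
      = Mᵀ * epsilon R * (A * epsilon R * Aᵀ) * epsilon R * N := by simp only [Matrix.mul_assoc]
    _ = -A.det • (Mᵀ * epsilon R * N) := by
      rw [mul_epsilon_mul_transpose, Matrix.mul_smul, Matrix.smul_mul,
        Matrix.mul_assoc _ _ (epsilon R), epsilon_mul_epsilon]
      simp only [Matrix.mul_neg, Matrix.mul_one, Matrix.neg_mul, Matrix.smul_mul, smul_neg,
        neg_smul]

end Epsilon

end Matrix

theorem of_singlet :
    of (fun i j => singlet (i, j)) = (((Real.sqrt 2 : ℝ) : ℂ))⁻¹ • epsilon ℂ := by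
  ext i j
  fin_cases i <;> fin_cases j <;> simp [singlet, epsilon]

theorem star_singlet (p : Fin 2 × Fin 2) : star (singlet p) = singlet p := by
  simp only [singlet, ← Complex.ofReal_inv, ← Complex.ofReal_neg]
  split_ifs <;> simp [Complex.conj_ofReal]

theorem sum_star_singlet_mul_mul (M N : Matrix (Fin 2) (Fin 2) ℂ) (i k : Fin 2) :
    ∑ p : Fin 2, ∑ q : Fin 2, star (singlet (p, q)) * M p i * N q k =
      (((Real.sqrt 2 : ℝ) : ℂ))⁻¹ * (Mᵀ * epsilon ℂ * N) i k := by
  calc _ = (Mᵀ * of (fun i j => singlet (i, j)) * N) i k := by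
        simp only [star_singlet, transpose_mul_mul_apply_eq_sum, of_apply]
    _ = _ := by rw [of_singlet, Matrix.mul_smul, Matrix.smul_mul, Matrix.smul_apply, smul_eq_mul]

theorem of_star_eq_smul_transpose_mul_epsilon_mul {β : Fin 2 × Fin 2 → ℂ} {l : ℂ}
    {M N : Matrix (Fin 2) (Fin 2) ℂ}
    (h : ∀ i j : Fin 2, star (β (i, j)) =
      l * ∑ p : Fin 2, ∑ q : Fin 2, star (singlet (p, q)) * M p i * N q j) :
    of (fun i j => star (β (i, j))) =
      (l * (((Real.sqrt 2 : ℝ) : ℂ))⁻¹) • (Mᵀ * epsilon ℂ * N) := by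
  ext i j
  rw [of_apply, h, sum_star_singlet_mul_mul, Matrix.smul_apply, smul_eq_mul, ← mul_assoc]

theorem stmt8_general (Lu La Lv : Matrix (Fin 2) (Fin 2) ℂ)
    (hLa : IsUnit La.det)
    (βua βav : Fin 2 × Fin 2 → ℂ) (l₁ l₂ : ℂ) (hl₁ : l₁ ≠ 0) (hl₂ : l₂ ≠ 0)
    (h1 : ∀ i j : Fin 2, star (βua (i, j)) =
      l₁ * ∑ p : Fin 2, ∑ q : Fin 2, star (singlet (p, q)) * Lu p i * La q j)
    (h2 : ∀ i j : Fin 2, star (βav (i, j)) =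
      l₂ * ∑ p : Fin 2, ∑ q : Fin 2, star (singlet (p, q)) * La p i * Lv q j) :
    ∃ μ : ℂ, μ ≠ 0 ∧ ∀ i k : Fin 2,
      (∑ j : Fin 2, ∑ j' : Fin 2, star (βua (i, j)) * singlet (j, j') * star (βav (j', k))) =
        μ * ∑ p : Fin 2, ∑ q : Fin 2, star (singlet (p, q)) * Lu p i * Lv q k := by
  set c : ℂ := (((Real.sqrt 2 : ℝ) : ℂ))⁻¹ with hc_def
  have hc : c ≠ 0 := by simp [c]
  refine ⟨-(l₁ * l₂ * c ^ 2 * La.det), by simp [hl₁, hl₂, hc, hLa.ne_zero], fun i k => ?_⟩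
  calc _ = (of (fun i j => star (βua (i, j))) * of (fun i j => singlet (i, j)) *
        of (fun i j => star (βav (i, j)))) i k := by
        simp only [mul_mul_apply_eq_sum, of_apply]
    _ = ((l₁ * c * c * (l₂ * c)) •
          ((Luᵀ * epsilon ℂ * La) * epsilon ℂ * (Laᵀ * epsilon ℂ * Lv))) i k := by
        rw [of_star_eq_smul_transpose_mul_epsilon_mul h1,
          of_star_eq_smul_transpose_mul_epsilon_mul h2, of_singlet, ← hc_def]
        simp only [Matrix.smul_mul, Matrix.mul_smul, smul_smul]
        ring_nf
    _ = _ := by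
        rw [epsilon_contraction, smul_smul, Matrix.smul_apply, smul_eq_mul,
          sum_star_singlet_mul_mul, ← hc_def]
        ring

/-- If `⟨β_ua| ∝ ⟨Ψ⁻|(L_u ⊗ L_a)` and `⟨β_av| ∝ ⟨Ψ⁻|(L_a ⊗ L_v)` with invertible
`L_u, L_a, L_v`, then the induced constraint `(⟨β_ua| ⊗ ⟨β_av|)(1 ⊗ |Ψ⁻⟩ ⊗ 1)`
is proportional, with nonzero constant, to `⟨Ψ⁻|(L_u ⊗ L_v)`. -/
theorem stmt8 (Lu La Lv : Matrix (Fin 2) (Fin 2) ℂ)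
    (hLu : IsUnit Lu.det) (hLa : IsUnit La.det) (hLv : IsUnit Lv.det)
    (βua βav : Fin 2 × Fin 2 → ℂ) (l₁ l₂ : ℂ) (hl₁ : l₁ ≠ 0) (hl₂ : l₂ ≠ 0)
    (h1 : ∀ i j : Fin 2, star (βua (i, j)) =
      l₁ * ∑ p : Fin 2, ∑ q : Fin 2, star (singlet (p, q)) * Lu p i * La q j)
    (h2 : ∀ i j : Fin 2, star (βav (i, j)) =
      l₂ * ∑ p : Fin 2, ∑ q : Fin 2, star (singlet (p, q)) * La p i * Lv q j) :
    ∃ μ : ℂ, μ ≠ 0 ∧ ∀ i k : Fin 2,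
      (∑ j : Fin 2, ∑ j' : Fin 2, star (βua (i, j)) * singlet (j, j') * star (βav (j', k))) =
        μ * ∑ p : Fin 2, ∑ q : Fin 2, star (singlet (p, q)) * Lu p i * Lv q k :=
  stmt8_general Lu La Lv hLa βua βav l₁ l₂ hl₁ hl₂ h1 h2
end

section
/- Let n ≥ 1 and for each pair u ≠ v in {1,…,n} let h_{uv} = |β_{uv}⟩⟨β_{uv}| ⊗ 1 act on (ℂ²)^{⊗n}, where ⟨β_{uv}| = λ_{uv} ⟨Ψ⁻|(L_u ⊗ L_v) for fixed invertible matrices L₁,…,L_n ∈ GL(2,ℂ) and nonzero scalars λ_{uv}. Then the kernel of H = Σ_{u<v} h_{uv} equals T(Sym^n(ℂ²)), where T = (L₁ ⊗ ⋯ ⊗ L_n)^{-1} and Sym^n(ℂ²) is the symmetric subspace of (ℂ²)^{⊗n}. In particular dim ker(H) = n + 1. -/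
/-!
Each `h_uv` is a rank-one positive operator on the sites `u, v` tensored with the identity, so
`H Φ = 0` exactly when every partial contraction `(⟨β_uv| ⊗ 1) Φ` vanishes. Since
`⟨β_uv| = λ_uv ⟨Ψ⁻| (L_u ⊗ L_v)` and `T` is the inverse of `⨂ₖ L_k`, the contraction of `Φ = T Ψ`
with `⟨β_uv|` vanishes iff the contraction of `Ψ` with the singlet does, i.e. iff `Ψ` is
invariant under exchanging the factors `u` and `v`. Transpositions generate the symmetric group,
so `ker H = T (Sym^n ℂ²)`. A symmetric `Ψ` is determined by its values on the `n + 1` vectors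
`|1…10…0⟩`, as any basis vector is a permutation of the one with the same number of ones.
-/

open Matrix

/-- The symmetric subspace of `(ℂ²)^{⊗n}`, in coordinates: functions on `Fin n → Fin 2`
invariant under permutation of the tensor factors. -/
noncomputable def symSubspace (n : ℕ) : Submodule ℂ ((Fin n → Fin 2) → ℂ) where
  carrier := {Φ | ∀ σ : Equiv.Perm (Fin n), ∀ y : Fin n → Fin 2, Φ (y ∘ σ) = Φ y}
  add_mem' := by intro a b ha hb σ y; simp [ha σ y, hb σ y]
  zero_mem' := by intro σ y; rfl
  smul_mem' := by intro c a ha σ y; simp [ha σ y]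

open Finset
open scoped Kronecker

section UpdatePair

variable {ι α : Type*} [DecidableEq ι]

def updatePair (x : ι → α) (u v : ι) (p : α × α) : ι → α :=
  Function.update (Function.update x u p.1) v p.2

variable {x : ι → α} {u v k : ι} {p : α × α}

@[simp] lemma updatePair_apply_left (h : u ≠ v) : updatePair x u v p u = p.1 := by
  simp [updatePair, Function.update_of_ne h]

@[simp] lemma updatePair_apply_right : updatePair x u v p v = p.2 := by
  simp [updatePair]

lemma updatePair_apply_of_ne (hu : k ≠ u) (hv : k ≠ v) : updatePair x u v p k = x k := by
  simp [updatePair, hu, hv]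

@[simp] lemma updatePair_updatePair (q : α × α) :
    updatePair (updatePair x u v p) u v q = updatePair x u v q := by
  funext k
  by_cases hv : k = v
  · subst hv; simp
  · by_cases hu : k = u
    · subst hu; simp [updatePair, hv]
    · simp [updatePair_apply_of_ne hu hv]

lemma updatePair_self : updatePair x u v (x u, x v) = x := by
  simp [updatePair]

lemma updatePair_eq_iff (h : u ≠ v) {y : ι → α} :
    updatePair x u v p = y ↔ p = (y u, y v) ∧ ∀ k, k ≠ u → k ≠ v → x k = y k := by
  constructor
  · rintro rfl
    exact ⟨by simp [h], fun k hu hv => (updatePair_apply_of_ne hu hv).symm⟩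
  · rintro ⟨rfl, hxy⟩
    funext k
    by_cases hv : k = v
    · subst hv; simp
    · by_cases hu : k = u
      · subst hu; simp [h]
      · simp [updatePair_apply_of_ne hu hv, hxy k hu hv]

lemma prod_eq_mul_mul_prod_compl_pair [Fintype ι] {M : Type*} [CommMonoid M] (h : u ≠ v)
    (f : ι → M) :
    ∏ k, f k = f u * f v * ∏ k ∈ {u, v}ᶜ, f k := by
  rw [← prod_mul_prod_compl {u, v}, prod_pair h]

lemma prod_compl_pair_updatePair [Fintype ι] {M : Type*} [CommMonoid M] (f : ι → α → M)
    (x : ι → α) (p : α × α) :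
    ∏ k ∈ {u, v}ᶜ, f k (updatePair x u v p k) = ∏ k ∈ {u, v}ᶜ, f k (x k) :=
  prod_congr rfl fun k hk => by
    simp only [mem_compl, mem_insert, mem_singleton, not_or] at hk
    rw [updatePair_apply_of_ne hk.1 hk.2]

variable [Fintype ι] [Fintype α] {M : Type*} [AddCommMonoid M]

lemma sum_sum_update (u : ι) (F : (ι → α) → M) :
    ∑ i, ∑ x, F (Function.update x u i) = Fintype.card α • ∑ x, F x := by
  let e : α × (ι → α) ≃ α × (ι → α) :=
    { toFun := fun p => (p.2 u, Function.update p.2 u p.1)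
      invFun := fun p => (p.2 u, Function.update p.2 u p.1)
      left_inv := fun p => by simp
      right_inv := fun p => by simp }
  have := Fintype.sum_equiv e (fun p => F (Function.update p.2 u p.1)) (fun p => F p.2)
    (fun p => rfl)
  rw [Fintype.sum_prod_type, Fintype.sum_prod_type] at this
  rw [this]
  simp only [sum_const, card_univ]

lemma sum_sum_updatePair (u v : ι) (F : (ι → α) → M) :
    ∑ p, ∑ x, F (updatePair x u v p) = Fintype.card α ^ 2 • ∑ x, F x := by
  calc ∑ p, ∑ x, F (updatePair x u v p)
      = ∑ i, ∑ x, ∑ j, F (Function.update (Function.update x u i) v j) := by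
        unfold updatePair
        rw [Fintype.sum_prod_type]
        exact sum_congr rfl fun _ _ => sum_comm
    _ = Fintype.card α • ∑ x, ∑ j, F (Function.update x v j) :=
        sum_sum_update u fun y => ∑ j, F (Function.update y v j)
    _ = Fintype.card α ^ 2 • ∑ x, F x := by
        rw [sum_comm, sum_sum_update, smul_smul, sq]

lemma sum_ite_agree_off_pair [DecidableEq α] (h : u ≠ v) (x : ι → α) (f : (ι → α) → M) :
    ∑ y, (if ∀ k, k ≠ u → k ≠ v → x k = y k then f y else 0) =
      ∑ p, f (updatePair x u v p) := by
  calc ∑ y, (if ∀ k, k ≠ u → k ≠ v → x k = y k then f y else 0)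
      = ∑ y, ∑ p, if updatePair x u v p = y then f y else 0 := by
        refine sum_congr rfl fun y _ => ?_
        simp [updatePair_eq_iff h, ite_and]
    _ = ∑ p, f (updatePair x u v p) := by
        rw [sum_comm]
        simp only [sum_ite_eq, mem_univ, if_true]

end UpdatePair

section PiKron

variable {ι α R : Type*} [Fintype ι]

def piKron [CommSemiring R] (A : ι → Matrix α α R) : Matrix (ι → α) (ι → α) R :=
  of fun x y => ∏ k, A k (x k) (y k)

lemma piKron_one [CommSemiring R] [DecidableEq α] : piKron (1 : ι → Matrix α α R) = 1 := by
  ext x y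
  simp [piKron, one_apply, prod_boole, funext_iff]

variable [DecidableEq ι] [Fintype α]

lemma piKron_mul_piKron [CommSemiring R] (A B : ι → Matrix α α R) :
    piKron A * piKron B = piKron (A * B) := by
  ext x y
  simp only [piKron, mul_apply, of_apply, Pi.mul_apply, Fintype.prod_sum, ← prod_mul_distrib]

variable [DecidableEq α] [CommRing R] {A : ι → Matrix α α R}

lemma piKron_inv_mul_piKron (hA : ∀ k, IsUnit (A k).det) :
    piKron (fun k => (A k)⁻¹) * piKron A = 1 := by
  rw [piKron_mul_piKron, ← piKron_one]
  exact congrArg piKron (funext fun k => nonsing_inv_mul _ (hA k))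

lemma piKron_mul_piKron_inv (hA : ∀ k, IsUnit (A k).det) :
    piKron A * piKron (fun k => (A k)⁻¹) = 1 := by
  rw [piKron_mul_piKron, ← piKron_one]
  exact congrArg piKron (funext fun k => mul_nonsing_inv _ (hA k))

end PiKron

section Contract

variable {ι α R : Type*} [DecidableEq ι] [Fintype α] [CommSemiring R] {u v : ι}

/-- `(⟨b| ⊗ 1) Φ` for the two-site bra `b` on the sites `u, v`, recorded as a function on
`ι → α` that ignores the coordinates `u` and `v`. -/
def contract (u v : ι) (b : α × α → R) (Φ : (ι → α) → R) : (ι → α) → R :=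
  fun x => ∑ p, b p * Φ (updatePair x u v p)

lemma contract_smul_left (c : R) (b : α × α → R) (Φ : (ι → α) → R) :
    contract u v (c • b) Φ = c • contract u v b Φ := by
  funext x
  simp [contract, mul_sum, mul_assoc]

@[simp] lemma contract_updatePair (b : α × α → R) (Φ : (ι → α) → R) (x : ι → α) (p : α × α) :
    contract u v b Φ (updatePair x u v p) = contract u v b Φ x := by
  simp [contract]

variable [Fintype ι]

lemma contract_piKron_mulVec_apply (h : u ≠ v) (A : ι → Matrix α α R) (b : α × α → R)
    (Ψ : (ι → α) → R) (x : ι → α) :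
    contract u v b (piKron A *ᵥ Ψ) x =
      ∑ z, (b ᵥ* (A u ⊗ₖ A v)) (z u, z v) * (∏ k ∈ {u, v}ᶜ, A k (x k) (z k)) * Ψ z := by
  calc contract u v b (piKron A *ᵥ Ψ) x
      = ∑ p, ∑ z, b p * (A u p.1 (z u) * A v p.2 (z v)) *
          (∏ k ∈ {u, v}ᶜ, A k (x k) (z k)) * Ψ z := by
        refine sum_congr rfl fun p _ => ?_
        simp only [mulVec, dotProduct, piKron, of_apply, mul_sum]
        refine sum_congr rfl fun z _ => ?_
        rw [prod_eq_mul_mul_prod_compl_pair h, updatePair_apply_left h, updatePair_apply_right,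
          prod_compl_pair_updatePair fun k a => A k a (z k)]
        ring
    _ = _ := by
        rw [sum_comm]
        simp only [vecMul, dotProduct, kroneckerMap_apply, sum_mul]

lemma contract_piKron_mulVec_eq_zero {𝕜 : Type*} [Field 𝕜] [CharZero 𝕜] (h : u ≠ v)
    (A : ι → Matrix α α 𝕜) (b : α × α → 𝕜)
    {Ψ : (ι → α) → 𝕜} (hΨ : contract u v (b ᵥ* (A u ⊗ₖ A v)) Ψ = 0) :
    contract u v b (piKron A *ᵥ Ψ) = 0 := by
  funext x
  set rest : (ι → α) → 𝕜 := fun z => ∏ k ∈ {u, v}ᶜ, A k (x k) (z k)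
  set b' := b ᵥ* (A u ⊗ₖ A v)
  have hrest (z : ι → α) (p : α × α) : rest (updatePair z u v p) = rest z :=
    prod_compl_pair_updatePair (fun k a => A k (x k) a) z p
  -- averaging over the fibres of `updatePair` turns the sum into one against `contract u v b' Ψ`
  have hsum := sum_sum_updatePair u v fun z => b' (z u, z v) * rest z * Ψ z
  simp only [updatePair_apply_left h, updatePair_apply_right, hrest] at hsum
  have hzero : ∑ p, ∑ z, b' p * rest z * Ψ (updatePair z u v p) = 0 := by
    rw [sum_comm]
    refine sum_eq_zero fun z _ => ?_
    have := congrFun hΨ z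
    simp only [contract, Pi.zero_apply] at this
    simp only [mul_right_comm _ (rest z), ← sum_mul, this, zero_mul]
  rw [hzero, eq_comm, smul_eq_zero] at hsum
  rw [contract_piKron_mulVec_apply h, Pi.zero_apply]
  have : Nonempty α := ⟨x u⟩
  exact hsum.resolve_left (pow_ne_zero 2 Fintype.card_ne_zero)

lemma contract_vecMul_kronecker_eq_zero_iff {𝕜 : Type*} [Field 𝕜] [CharZero 𝕜] [DecidableEq α]
    (h : u ≠ v) {A : ι → Matrix α α 𝕜} (hA : ∀ k, IsUnit (A k).det) (b : α × α → 𝕜)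
    (Φ : (ι → α) → 𝕜) :
    contract u v (b ᵥ* (A u ⊗ₖ A v)) Φ = 0 ↔ contract u v b (piKron A *ᵥ Φ) = 0 := by
  refine ⟨contract_piKron_mulVec_eq_zero h A b, fun hΦ => ?_⟩
  rw [← one_mulVec Φ, ← piKron_inv_mul_piKron hA, ← mulVec_mulVec]
  refine contract_piKron_mulVec_eq_zero h _ _ ?_
  rwa [vecMul_vecMul, ← mul_kronecker_mul, mul_nonsing_inv _ (hA u), mul_nonsing_inv _ (hA v),
    one_kronecker_one, vecMul_one]

end Contract

section PairProjection

variable {ι α 𝕜 : Type*} [Fintype ι] [DecidableEq ι] [Fintype α] [DecidableEq α] [RCLike 𝕜]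
  {u v : ι}

/-- `|a⟩⟨a|` on the sites `u, v`, tensored with the identity on the other sites. -/
def pairProj (u v : ι) (a : α × α → 𝕜) : Matrix (ι → α) (ι → α) 𝕜 :=
  of fun x y => a (x u, x v) * star (a (y u, y v)) *
    if ∀ k, k ≠ u → k ≠ v → x k = y k then 1 else 0

lemma pairProj_mulVec (h : u ≠ v) (a : α × α → 𝕜) (Φ : (ι → α) → 𝕜) :
    pairProj u v a *ᵥ Φ = fun x => a (x u, x v) * contract u v (star a) Φ x := by
  funext x
  simp only [mulVec, dotProduct, pairProj, of_apply, mul_ite, mul_one, mul_zero, ite_mul,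
    zero_mul]
  simp_rw [mul_assoc]
  rw [sum_ite_agree_off_pair h x fun y => a (x u, x v) * (star (a (y u, y v)) * Φ y)]
  simp [contract, mul_sum, h]

lemma card_sq_mul_dotProduct_pairProj_mulVec (h : u ≠ v) (a : α × α → 𝕜) (Φ : (ι → α) → 𝕜) :
    (Fintype.card α ^ 2 : 𝕜) * (star Φ ⬝ᵥ pairProj u v a *ᵥ Φ) =
      star (contract u v (star a) Φ) ⬝ᵥ contract u v (star a) Φ := by
  have hstar (x : ι → α) :
      star (contract u v (star a) Φ x) = ∑ p, a p * star (Φ (updatePair x u v p)) := by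
    simp [contract, star_sum, mul_comm]
  have hsum := sum_sum_updatePair u v fun y => a (y u, y v) * star (Φ y) * contract u v (star a) Φ y
  simp only [updatePair_apply_left h, updatePair_apply_right, contract_updatePair] at hsum
  calc (Fintype.card α ^ 2 : 𝕜) * (star Φ ⬝ᵥ pairProj u v a *ᵥ Φ)
      = Fintype.card α ^ 2 • ∑ x, a (x u, x v) * star (Φ x) * contract u v (star a) Φ x := by
        simp only [pairProj_mulVec h, nsmul_eq_mul, Nat.cast_pow, dotProduct, Pi.star_apply]
        simp_rw [mul_left_comm (star (Φ _)), mul_assoc]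
    _ = star (contract u v (star a) Φ) ⬝ᵥ contract u v (star a) Φ := by
        rw [← hsum, sum_comm]
        simp only [dotProduct, Pi.star_apply, hstar, sum_mul]

open scoped ComplexOrder in
lemma sum_pairProj_mulVec_eq_zero_iff (s : Finset (ι × ι)) (hs : ∀ p ∈ s, p.1 ≠ p.2)
    (a : ι × ι → α × α → 𝕜) (Φ : (ι → α) → 𝕜) :
    (∑ p ∈ s, pairProj p.1 p.2 (a p)) *ᵥ Φ = 0 ↔
      ∀ p ∈ s, contract p.1 p.2 (star (a p)) Φ = 0 := by
  rw [sum_mulVec]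
  constructor
  · intro hΦ
    have hquad : ∑ p ∈ s, star (contract p.1 p.2 (star (a p)) Φ) ⬝ᵥ
        contract p.1 p.2 (star (a p)) Φ = 0 := by
      rw [← sum_congr rfl fun p hp => card_sq_mul_dotProduct_pairProj_mulVec (hs p hp) (a p) Φ,
        ← mul_sum, ← dotProduct_sum, hΦ, dotProduct_zero, mul_zero]
    rw [sum_eq_zero_iff_of_nonneg fun p _ => dotProduct_star_self_nonneg _] at hquad
    exact fun p hp => dotProduct_star_self_eq_zero.1 (hquad p hp)
  · intro hc
    refine sum_eq_zero fun p hp => ?_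
    funext x
    simp [pairProj_mulVec (hs p hp), hc p hp]

end PairProjection

section Symmetric

variable {ι α : Type*} [DecidableEq ι]

lemma comp_swap_eq_updatePair (y : ι → α) (u v : ι) :
    y ∘ Equiv.swap u v = updatePair y u v (y v, y u) := by
  funext k
  simp only [Function.comp_apply, updatePair, Function.update_apply, Equiv.swap_apply_def]
  split_ifs <;> simp_all

lemma contract_star_singlet_apply (u v : ι) (Ψ : (ι → Fin 2) → ℂ) (x : ι → Fin 2) :
    contract u v (star singlet) Ψ x =
      ((Real.sqrt 2 : ℝ) : ℂ)⁻¹ * (Ψ (updatePair x u v (0, 1)) - Ψ (updatePair x u v (1, 0))) := by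
  simp only [contract, Pi.star_apply, singlet, Fin.isValue, Prod.ext_iff, RCLike.star_def,
    Fintype.sum_prod_type, Fin.sum_univ_two, zero_ne_one, and_false, ↓reduceIte, and_true,
    one_ne_zero, map_zero, zero_mul, map_inv₀, Complex.conj_ofReal, zero_add, map_neg, neg_mul,
    add_zero]
  ring

lemma contract_star_singlet_eq_zero_iff {u v : ι} (h : u ≠ v) (Ψ : (ι → Fin 2) → ℂ) :
    contract u v (star singlet) Ψ = 0 ↔ ∀ y, Ψ (y ∘ Equiv.swap u v) = Ψ y := by
  have hexch : contract u v (star singlet) Ψ = 0 ↔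
      ∀ x, Ψ (updatePair x u v (0, 1)) = Ψ (updatePair x u v (1, 0)) := by
    simp [funext_iff, contract_star_singlet_apply, sub_eq_zero]
  rw [hexch]
  constructor
  · intro hΨ y
    rw [comp_swap_eq_updatePair]
    conv_rhs => rw [← updatePair_self (x := y) (u := u) (v := v)]
    generalize y u = a, y v = b
    fin_cases a <;> fin_cases b <;> simp [hΨ]
  · intro hΨ x
    have := hΨ (updatePair x u v (0, 1))
    rw [comp_swap_eq_updatePair] at this
    simpa [h] using this.symm

end Symmetric

section SymmetricSubspace

variable {n : ℕ}

lemma mem_symSubspace_iff (Ψ : (Fin n → Fin 2) → ℂ) :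
    Ψ ∈ symSubspace n ↔ ∀ u v : Fin n, u < v → ∀ y, Ψ (y ∘ Equiv.swap u v) = Ψ y := by
  refine ⟨fun hΨ u v _ y => hΨ _ y, fun hΨ σ => ?_⟩
  have hswap (u v : Fin n) (h : u ≠ v) (y : Fin n → Fin 2) : Ψ (y ∘ Equiv.swap u v) = Ψ y := by
    rcases h.lt_or_gt with h | h
    · exact hΨ u v h y
    · rw [Equiv.swap_comm]; exact hΨ v u h y
  induction σ using Equiv.Perm.swap_induction_on with
  | one => exact fun y => rfl
  | swap_mul f a b hab ih =>
    intro y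
    rw [Equiv.Perm.coe_mul, ← Function.comp_assoc, ih, hswap a b hab]

def countOnes (y : Fin n → Fin 2) : ℕ := #{j | y j = 1}

def firstOnes (n k : ℕ) : Fin n → Fin 2 := fun j => if (j : ℕ) < k then 1 else 0

lemma countOnes_le (y : Fin n → Fin 2) : countOnes y ≤ n :=
  (card_filter_le _ _).trans (by simp)

lemma countOnes_comp_perm (y : Fin n → Fin 2) (σ : Equiv.Perm (Fin n)) :
    countOnes (y ∘ σ) = countOnes y :=
  card_equiv σ (by simp)

lemma countOnes_firstOnes {k : ℕ} (hk : k ≤ n) : countOnes (firstOnes n k) = k := by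
  simp [countOnes, firstOnes, Fin.card_filter_val_lt, hk]

lemma exists_perm_comp_eq_of_countOnes_eq {y z : Fin n → Fin 2} (h : countOnes y = countOnes z) :
    ∃ σ : Equiv.Perm (Fin n), z ∘ σ = y := by
  have h1 : Fintype.card {j // y j = 1} = Fintype.card {j // z j = 1} := by
    rw [Fintype.card_subtype, Fintype.card_subtype]; exact h
  have h0 : Fintype.card {j // ¬ y j = 1} = Fintype.card {j // ¬ z j = 1} := by
    rw [Fintype.card_subtype_compl, Fintype.card_subtype_compl, h1]
  refine ⟨(Fintype.equivOfCardEq h1).subtypeCongr (Fintype.equivOfCardEq h0), funext fun j => ?_⟩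
  have hfin : ∀ a b : Fin 2, ¬ a = 1 → ¬ b = 1 → a = b := by decide
  by_cases hj : y j = 1
  all_goals simp only [Function.comp_apply, Equiv.subtypeCongr, Equiv.trans_apply]
  · rw [Equiv.sumCompl_symm_apply_of_pos (p := (y · = 1)) hj]
    simp only [Equiv.sumCongr_apply, Sum.map_inl, Equiv.sumCompl_apply_inl]
    rw [((Fintype.equivOfCardEq h1) ⟨j, hj⟩).2, hj]
  · rw [Equiv.sumCompl_symm_apply_of_neg (p := (y · = 1)) hj]
    simp only [Equiv.sumCongr_apply, Sum.map_inr, Equiv.sumCompl_apply_inr]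
    exact hfin _ _ ((Fintype.equivOfCardEq h0) ⟨j, hj⟩).2 hj

lemma finrank_symSubspace (n : ℕ) : Module.finrank ℂ (symSubspace n) = n + 1 := by
  let e : symSubspace n ≃ₗ[ℂ] (Fin (n + 1) → ℂ) :=
    { toFun := fun Φ k => (Φ : (Fin n → Fin 2) → ℂ) (firstOnes n k)
      invFun := fun c => ⟨fun y => c ⟨countOnes y, Nat.lt_succ_of_le (countOnes_le y)⟩,
        fun σ y => by simp only [countOnes_comp_perm]⟩
      map_add' := fun _ _ => rfl
      map_smul' := fun _ _ => rfl
      left_inv := fun Φ => Subtype.ext <| funext fun y => by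
        obtain ⟨σ, hσ⟩ := exists_perm_comp_eq_of_countOnes_eq
          (countOnes_firstOnes (countOnes_le y)).symm
        have := Φ.2 σ (firstOnes n (countOnes y))
        rw [hσ] at this
        exact this.symm
      right_inv := fun c => funext fun k => by
        simp only [countOnes_firstOnes (Nat.lt_succ_iff.mp k.isLt)] }
  simp [e.finrank_eq]

end SymmetricSubspace

theorem stmt10_general (n : ℕ) (L : Fin n → Matrix (Fin 2) (Fin 2) ℂ)
    (hL : ∀ k : Fin n, IsUnit (L k).det)
    (lam : Fin n → Fin n → ℂ) (hlam : ∀ u v : Fin n, u ≠ v → lam u v ≠ 0)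
    (β : Fin n → Fin n → Fin 2 × Fin 2 → ℂ)
    (hβ : ∀ u v : Fin n, u ≠ v → ∀ i j : Fin 2, star (β u v (i, j)) =
      lam u v * ∑ p : Fin 2, ∑ q : Fin 2, star (singlet (p, q)) * L u p i * L v q j)
    (H : Matrix (Fin n → Fin 2) (Fin n → Fin 2) ℂ)
    (hH : ∀ x y : Fin n → Fin 2, H x y = ∑ u : Fin n, ∑ v : Fin n, if u < v then
        β u v (x u, x v) * star (β u v (y u, y v)) *
          (if ∀ k : Fin n, k ≠ u → k ≠ v → x k = y k then 1 else 0) else 0)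
    (T : Matrix (Fin n → Fin 2) (Fin n → Fin 2) ℂ)
    (hT : ∀ x y : Fin n → Fin 2, T x y = ∏ k : Fin n, (L k)⁻¹ (x k) (y k)) :
    LinearMap.ker H.mulVecLin = Submodule.map T.mulVecLin (symSubspace n) ∧
    Module.finrank ℂ (LinearMap.ker H.mulVecLin) = n + 1 := by
  have hTL : T = piKron fun k => (L k)⁻¹ := by ext x y; exact hT x y
  have hHsum : H = ∑ p ∈ univ.filter (fun p : Fin n × Fin n => p.1 < p.2),
      pairProj p.1 p.2 (β p.1 p.2) := by
    ext x y; simp [hH, pairProj, Matrix.sum_apply, sum_filter, Fintype.sum_prod_type]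
  have hβL (u v : Fin n) (h : u ≠ v) :
      star (β u v) = lam u v • (star singlet ᵥ* (L u ⊗ₖ L v)) := by
    funext ⟨i, j⟩
    simp [hβ u v h, vecMul, dotProduct, Fintype.sum_prod_type, mul_assoc]
  let e : ((Fin n → Fin 2) → ℂ) ≃ₗ[ℂ] ((Fin n → Fin 2) → ℂ) :=
    LinearEquiv.ofLinearMap T.mulVecLin (piKron L).mulVecLin
      (by rw [← mulVecLin_mul, hTL, piKron_inv_mul_piKron hL, mulVecLin_one])
      (by rw [← mulVecLin_mul, hTL, piKron_mul_piKron_inv hL, mulVecLin_one])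
  have hker : LinearMap.ker H.mulVecLin = (symSubspace n).map (e : _ →ₗ[ℂ] _) := by
    ext Φ
    rw [Submodule.mem_map_equiv, LinearMap.mem_ker, mulVecLin_apply, hHsum,
      sum_pairProj_mulVec_eq_zero_iff _ (by simp +contextual [ne_of_lt]), mem_symSubspace_iff]
    simp only [mem_filter, mem_univ, true_and, Prod.forall]
    refine forall₂_congr fun u v => imp_congr_right fun huv => ?_
    rw [hβL u v huv.ne, contract_smul_left, smul_eq_zero, or_iff_right (hlam u v huv.ne),
      contract_vecMul_kronecker_eq_zero_iff huv.ne hL, contract_star_singlet_eq_zero_iff huv.ne]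
    rfl
  exact ⟨hker, by rw [hker, LinearEquiv.finrank_map_eq, finrank_symSubspace]⟩

/-- Let `H = ∑_{u<v} h_uv` on `(ℂ²)^{⊗n}`, where `h_uv = |β_uv⟩⟨β_uv| ⊗ 1` acts on
qubits `u, v` and `⟨β_uv| = λ_uv ⟨Ψ⁻|(L_u ⊗ L_v)` for invertible `L_k` and nonzero
`λ_uv`.  Then `ker H = T(Sym^n(ℂ²))` for `T = (L₁ ⊗ ⋯ ⊗ L_n)⁻¹`, and
`dim ker H = n + 1`. -/
theorem stmt10 (n : ℕ) (hn : 1 ≤ n) (L : Fin n → Matrix (Fin 2) (Fin 2) ℂ)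
    (hL : ∀ k : Fin n, IsUnit (L k).det)
    (lam : Fin n → Fin n → ℂ) (hlam : ∀ u v : Fin n, u ≠ v → lam u v ≠ 0)
    (β : Fin n → Fin n → Fin 2 × Fin 2 → ℂ)
    (hβ : ∀ u v : Fin n, u ≠ v → ∀ i j : Fin 2, star (β u v (i, j)) =
      lam u v * ∑ p : Fin 2, ∑ q : Fin 2, star (singlet (p, q)) * L u p i * L v q j)
    (H : Matrix (Fin n → Fin 2) (Fin n → Fin 2) ℂ)
    (hH : ∀ x y : Fin n → Fin 2, H x y = ∑ u : Fin n, ∑ v : Fin n, if u < v then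
        β u v (x u, x v) * star (β u v (y u, y v)) *
          (if ∀ k : Fin n, k ≠ u → k ≠ v → x k = y k then 1 else 0) else 0)
    (T : Matrix (Fin n → Fin 2) (Fin n → Fin 2) ℂ)
    (hT : ∀ x y : Fin n → Fin 2, T x y = ∏ k : Fin n, (L k)⁻¹ (x k) (y k)) :
    LinearMap.ker H.mulVecLin = Submodule.map T.mulVecLin (symSubspace n) ∧
    Module.finrank ℂ (LinearMap.ker H.mulVecLin) = n + 1 :=
  stmt10_general n L hL lam hlam β hβ H hH T hT
end

section
/- For any n+1 pairwise linearly independent vectors |α₀⟩, …, |α_n⟩ ∈ ℂ², the product vectors |α₀⟩^{⊗n}, …, |α_n⟩^{⊗n} form a basis of the symmetric subspace Sym^n(ℂ²). -/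
/-- The `n`-fold tensor power `a^{⊗n}` of a single-qubit vector, in coordinates. -/
def tensorPow (n : ℕ) (a : Fin 2 → ℂ) : (Fin n → Fin 2) → ℂ := fun x => ∏ k : Fin n, a (x k)

open Finset

theorem linearIndependent_of_biorthogonal {R M ι : Type*} [CommRing R] [NoZeroDivisors R]
    [AddCommGroup M] [Module R M] {v : ι → M} (f : ι → M →ₗ[R] R)
    (hdiag : ∀ i, f i (v i) ≠ 0) (hoff : ∀ i j, i ≠ j → f i (v j) = 0) :
    LinearIndependent R v := by
  classical
  rw [linearIndependent_iff']
  intro s g hg i hi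
  have hfi : ∑ j ∈ s, g j * f i (v j) = 0 := by simpa using congrArg (f i) hg
  rw [sum_eq_single i (fun j _ hji => by rw [hoff i j hji.symm, mul_zero])
    (absurd hi)] at hfi
  exact (mul_eq_zero.mp hfi).resolve_right (hdiag i)

theorem prod_dotProduct_prod {R ι κ : Type*} [CommSemiring R] [Fintype ι] [DecidableEq ι]
    [Fintype κ] (A B : ι → κ → R) :
    (fun x : ι → κ => ∏ k, A k (x k)) ⬝ᵥ (fun x => ∏ k, B k (x k)) = ∏ k, A k ⬝ᵥ B k := by
  simp only [dotProduct, Fintype.prod_sum, prod_mul_distrib]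

section Perp

variable {K : Type*} [Field K]

def perp (u : Fin 2 → K) : Fin 2 → K := ![-u 1, u 0]

theorem perp_dotProduct (u v : Fin 2 → K) : perp u ⬝ᵥ v = u 0 * v 1 - u 1 * v 0 := by
  simp only [perp, dotProduct, Fin.sum_univ_two, Matrix.cons_val_zero, Matrix.cons_val_one,
    Matrix.cons_val_fin_one]
  ring

theorem perp_dotProduct_self (u : Fin 2 → K) : perp u ⬝ᵥ u = 0 := by
  rw [perp_dotProduct]; ring

theorem perp_dotProduct_ne_zero {u v : Fin 2 → K} (hu : ∀ c : K, u ≠ c • v)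
    (hv : ∀ c : K, v ≠ c • u) : perp u ⬝ᵥ v ≠ 0 := by
  rw [perp_dotProduct, sub_ne_zero]
  intro h
  obtain ⟨j, hj⟩ : ∃ j, u j ≠ 0 := Function.ne_iff.mp fun hu0 => hu 0 (by rw [hu0, zero_smul]; rfl)
  refine hv (v j / u j) (funext fun i => ?_)
  rw [Pi.smul_apply, smul_eq_mul, div_mul_eq_mul_div, eq_div_iff hj]
  fin_cases i <;> fin_cases j <;> grind

end Perp

theorem tensorPow_mem_symSubspace (n : ℕ) (a : Fin 2 → ℂ) : tensorPow n a ∈ symSubspace n :=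
  fun σ y => Equiv.prod_comp σ (fun k => a (y k))

theorem perp_prod_dotProduct_tensorPow (n : ℕ) (β : Fin n → Fin 2 → ℂ) (a : Fin 2 → ℂ) :
    (fun x => ∏ k, perp (β k) (x k)) ⬝ᵥ tensorPow n a = ∏ k, perp (β k) ⬝ᵥ a :=
  prod_dotProduct_prod _ (fun _ => a)

theorem linearIndependent_tensorPow (n : ℕ) {α : Fin (n + 1) → Fin 2 → ℂ}
    (hind : ∀ i j : Fin (n + 1), i ≠ j → ∀ c : ℂ, α i ≠ c • α j) :
    LinearIndependent ℂ (fun j => tensorPow n (α j)) := by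
  refine linearIndependent_of_biorthogonal
    (fun i => dotProductEquiv ℂ _ fun x => ∏ k, perp (α (i.succAbove k)) (x k)) ?_ ?_
  · intro i
    simp only [dotProductEquiv_apply_apply, perp_prod_dotProduct_tensorPow]
    exact prod_ne_zero_iff.mpr fun k _ => perp_dotProduct_ne_zero
      (hind _ _ (Fin.succAbove_ne i k)) (hind _ _ (Fin.succAbove_ne i k).symm)
  · intro i j hij
    obtain ⟨k, rfl⟩ := Fin.exists_succAbove_eq hij.symm
    simp only [dotProductEquiv_apply_apply, perp_prod_dotProduct_tensorPow]
    exact prod_eq_zero (mem_univ k) (perp_dotProduct_self _)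

theorem exists_perm_comp_eq_of_card_eq {ι : Type*} [Fintype ι] [DecidableEq ι]
    {x y : ι → Fin 2} (h : #{i | x i = 1} = #{i | y i = 1}) :
    ∃ σ : Equiv.Perm ι, y ∘ σ = x := by
  have hc : Fintype.card {i // x i = 1} = Fintype.card {i // y i = 1} := by
    simpa only [Fintype.card_subtype] using h
  refine ⟨(Fintype.equivOfCardEq hc).extendSubtype, funext fun i => ?_⟩
  by_cases hi : x i = 1
  · rw [Function.comp_apply, (Fintype.equivOfCardEq hc).extendSubtype_mem i hi, hi]
  · have hσi := (Fintype.equivOfCardEq hc).extendSubtype_not_mem i hi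
    rw [Function.comp_apply]
    omega

theorem symSubspace_apply_eq_of_card_eq {n : ℕ} {Φ : (Fin n → Fin 2) → ℂ}
    (hΦ : Φ ∈ symSubspace n) {x y : Fin n → Fin 2} (h : #{i | x i = 1} = #{i | y i = 1}) :
    Φ x = Φ y := by
  obtain ⟨σ, rfl⟩ := exists_perm_comp_eq_of_card_eq h
  exact hΦ σ y

def weightRep (n : ℕ) (m : Fin (n + 1)) : Fin n → Fin 2 := fun i => if (i : ℕ) < m then 1 else 0

theorem card_weightRep (n : ℕ) (m : Fin (n + 1)) : #{i | weightRep n m i = 1} = m := by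
  simp [weightRep, Fin.card_filter_val_lt, Nat.lt_succ_iff.mp m.isLt]

theorem finrank_symSubspace_le (n : ℕ) : Module.finrank ℂ (symSubspace n) ≤ n + 1 := by
  let evalRep := LinearMap.funLeft ℂ ℂ (weightRep n) ∘ₗ (symSubspace n).subtype
  have hinj : Function.Injective evalRep := by
    refine (injective_iff_map_eq_zero evalRep).mpr fun ⟨Φ, hΦ⟩ hzero => ?_
    ext x
    have hm : #{i | x i = 1} < n + 1 := Nat.lt_succ_of_le (card_le_univ _ |>.trans_eq (by simp))
    calc Φ x = Φ (weightRep n ⟨_, hm⟩) :=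
          symSubspace_apply_eq_of_card_eq hΦ (card_weightRep n ⟨_, hm⟩).symm
      _ = 0 := congrFun hzero ⟨_, hm⟩
  simpa using LinearMap.finrank_le_finrank_of_injective hinj

/-- For any `n+1` pairwise linearly independent vectors `α₀, …, α_n ∈ ℂ²`, the product
vectors `α_j^{⊗n}` form a basis of the symmetric subspace `Sym^n(ℂ²)`. -/
theorem stmt12 (n : ℕ) (α : Fin (n + 1) → Fin 2 → ℂ)
    (hind : ∀ i j : Fin (n + 1), i ≠ j → ∀ c : ℂ, α i ≠ c • α j) :
    (∀ j, tensorPow n (α j) ∈ symSubspace n) ∧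
    LinearIndependent ℂ (fun j => tensorPow n (α j)) ∧
    Submodule.span ℂ (Set.range fun j => tensorPow n (α j)) = symSubspace n := by
  have hmem : ∀ j, tensorPow n (α j) ∈ symSubspace n := fun j => tensorPow_mem_symSubspace n (α j)
  have hli := linearIndependent_tensorPow n hind
  refine ⟨hmem, hli, Submodule.eq_of_le_of_finrank_le ?_ ?_⟩
  · exact Submodule.span_le.mpr (Set.range_subset_iff.mpr hmem)
  · rw [finrank_span_eq_card hli, Fintype.card_fin]
    exact finrank_symSubspace_le n
end

section
/- Let h be a Hermitian operator on ℂ²⊗ℂ² of rank 2 whose image (the span of its nonzero eigenvectors) contains no entangled vector, and suppose h ≥ 0 with nontrivial kernel. Then h = |φ⟩⟨φ| ⊗ η or h = η ⊗ |φ⟩⟨φ| for some unit vector |φ⟩ ∈ ℂ² and some positive definite operator η on ℂ²; in particular ker(h) = ker(|φ⟩⟨φ| ⊗ 1) (respectively ker(1 ⊗ |φ⟩⟨φ|)). -/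
/-!
A vector of `ℂ² ⊗ ℂ²` is a product vector exactly when the `2 × 2` minors of its coefficient
array vanish, and (Cauchy–Binet) a minor of `a ⊗ b + c ⊗ d` is a minor of `(a, c)` times a minor
of `(b, d)`. So if the sum of two product vectors is again one, they share their left or their
right factor up to scaling, and in a space of product vectors all vectors then share one factor:
every column of `h` is `φ ⊗ y` (or `x ⊗ φ`) for a fixed unit vector `φ`. With `V = φ ⊗ 1`, `V Vᴴ`
fixes such vectors, so hermiticity gives `h = V Vᴴ h V Vᴴ = |φ⟩⟨φ| ⊗ η` with `η = Vᴴ h V`. This `η`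
is positive semidefinite of rank at least `rank h = 2`, hence positive definite, and
`|φ⟩⟨φ| ⊗ η = (1 ⊗ η) (|φ⟩⟨φ| ⊗ 1)` with `1 ⊗ η` invertible identifies the kernels.
-/

open Matrix
open scoped Kronecker ComplexOrder

section Proportional

variable {ι κ R K : Type*}

def Proportional [Mul R] (a b : ι → R) : Prop := ∀ i k, a i * b k = a k * b i

theorem Proportional.symm [CommMagma R] {a b : ι → R} (h : Proportional a b) :
    Proportional b a := fun i k => by rw [mul_comm (b i), h k i, mul_comm]

theorem Proportional.exists_eq_smul [Field K] {a b : ι → K} (h : Proportional a b) (ha : a ≠ 0) :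
    ∃ t : K, b = t • a := by
  obtain ⟨m, hm⟩ := Function.ne_iff.mp ha
  refine ⟨b m / a m, funext fun k => ?_⟩
  rw [Pi.smul_apply, smul_eq_mul, div_mul_eq_mul_div, eq_div_iff hm]
  linear_combination h m k

theorem Proportional.trans [Field K] {a b c : ι → K} (hab : Proportional a b)
    (hbc : Proportional b c) (hb : b ≠ 0) : Proportional a c := by
  obtain ⟨s, rfl⟩ := hab.symm.exists_eq_smul hb
  obtain ⟨t, rfl⟩ := hbc.exists_eq_smul hb
  intro i k
  simp only [Pi.smul_apply, smul_eq_mul]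
  ring

theorem proportional_or_proportional_of_add_eq [CommRing R] [NoZeroDivisors R]
    {a c u : ι → R} {b d w : κ → R} (h : ∀ i j, a i * b j + c i * d j = u i * w j) :
    Proportional a c ∨ Proportional b d := by
  by_contra! hcon
  obtain ⟨⟨i, k, hik⟩, ⟨j, l, hjl⟩⟩ :
      (∃ i k, a i * c k ≠ a k * c i) ∧ ∃ j l, b j * d l ≠ b l * d j := by
    simpa [Proportional] using hcon
  refine mul_ne_zero (sub_ne_zero.mpr hik) (sub_ne_zero.mpr hjl) ?_
  linear_combination (a k * b l + c k * d l) * h i j + (u i * w j) * h k l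
    - (a k * b j + c k * d j) * h i l - (u i * w l) * h k j

end Proportional

section ProductVectors

variable {ι κ K : Type*} [Field K] {S : AddSubmonoid (ι × κ → K)}

theorem AddSubmonoid.proportional_or_proportional_of_mem
    (hS : ∀ v ∈ S, ∃ (x : ι → K) (y : κ → K), ∀ i j, v (i, j) = x i * y j)
    {v v' : ι × κ → K} (hv : v ∈ S) (hv' : v' ∈ S) {a c : ι → K} {b d : κ → K}
    (hab : ∀ i j, v (i, j) = a i * b j) (hcd : ∀ i j, v' (i, j) = c i * d j) :
    Proportional a c ∨ Proportional b d := by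
  obtain ⟨u, w, huw⟩ := hS (v + v') (S.add_mem hv hv')
  exact proportional_or_proportional_of_add_eq (u := u) (w := w) fun i j => by
    rw [← hab, ← hcd, ← huw, Pi.add_apply]

theorem AddSubmonoid.exists_common_left_or_right_factor
    (hS : ∀ v ∈ S, ∃ (x : ι → K) (y : κ → K), ∀ i j, v (i, j) = x i * y j) :
    (∃ x : ι → K, ∀ v ∈ S, ∃ y : κ → K, ∀ i j, v (i, j) = x i * y j) ∨
      ∃ y : κ → K, ∀ v ∈ S, ∃ x : ι → K, ∀ i j, v (i, j) = x i * y j := by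
  by_cases hS0 : ∀ v ∈ S, v = 0
  · exact Or.inl ⟨0, fun v hv => ⟨0, fun i j => by simp [hS0 v hv]⟩⟩
  push Not at hS0
  obtain ⟨v₀, hv₀S, hv₀⟩ := hS0
  obtain ⟨x, y, hxy⟩ := hS v₀ hv₀S
  have hx : x ≠ 0 := by rintro rfl; exact hv₀ (funext fun p => by simp [hxy p.1 p.2])
  have hy : y ≠ 0 := by rintro rfl; exact hv₀ (funext fun p => by simp [hxy p.1 p.2])
  by_contra! hcon
  obtain ⟨v₁, hv₁S, hv₁⟩ := hcon.1 x
  obtain ⟨v₂, hv₂S, hv₂⟩ := hcon.2 y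
  obtain ⟨u, w, huw⟩ := hS v₁ hv₁S
  obtain ⟨u', w', huw'⟩ := hS v₂ hv₂S
  have hxu : ¬Proportional x u := fun hxu => by
    obtain ⟨t, rfl⟩ := hxu.exists_eq_smul hx
    obtain ⟨i, j, hij⟩ := hv₁ (t • w)
    exact hij (by simp only [huw, Pi.smul_apply, smul_eq_mul]; ring)
  have hyw' : ¬Proportional y w' := fun hyw' => by
    obtain ⟨t, rfl⟩ := hyw'.exists_eq_smul hy
    obtain ⟨i, j, hij⟩ := hv₂ (t • u')
    exact hij (by simp only [huw', Pi.smul_apply, smul_eq_mul]; ring)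
  have hw : w ≠ 0 := by rintro rfl; obtain ⟨i, j, hij⟩ := hv₁ 0; exact hij (by simp [huw])
  have hu' : u' ≠ 0 := by rintro rfl; obtain ⟨i, j, hij⟩ := hv₂ 0; exact hij (by simp [huw'])
  have hyw : Proportional y w :=
    (S.proportional_or_proportional_of_mem hS hv₀S hv₁S hxy huw).resolve_left hxu
  have hxu' : Proportional x u' :=
    (S.proportional_or_proportional_of_mem hS hv₀S hv₂S hxy huw').resolve_right hyw'
  rcases S.proportional_or_proportional_of_mem hS hv₁S hv₂S huw huw' with huu' | hww'
  · exact hxu (hxu'.trans huu'.symm hu')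
  · exact hyw' (hyw.trans hww' hw)

end ProductVectors

theorem exists_eq_smul_unit_of_ne_zero {ι 𝕜 : Type*} [Fintype ι] [RCLike 𝕜]
    {x : ι → 𝕜} (hx : x ≠ 0) : ∃ (c : 𝕜) (φ : ι → 𝕜), star φ ⬝ᵥ φ = 1 ∧ x = c • φ := by
  obtain ⟨n, hn, hN⟩ := RCLike.pos_iff_exists_ofReal.mp (dotProduct_star_self_pos_iff.mpr hx)
  have hc : ((√n : ℝ) : 𝕜) ≠ 0 := RCLike.ofReal_ne_zero.mpr (Real.sqrt_pos.mpr hn).ne'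
  refine ⟨(√n : ℝ), ((√n : ℝ) : 𝕜)⁻¹ • x, ?_, (smul_inv_smul₀ hc x).symm⟩
  rw [star_smul, smul_dotProduct, dotProduct_smul, ← hN, RCLike.star_def, map_inv₀,
    RCLike.conj_ofReal, smul_eq_mul, smul_eq_mul, ← mul_assoc, ← mul_inv, ← RCLike.ofReal_mul,
    Real.mul_self_sqrt hn.le, inv_mul_cancel₀ (RCLike.ofReal_ne_zero.mpr hn.ne')]

namespace Matrix

theorem isUnit_of_card_le_rank {κ K : Type*} [Fintype κ] [DecidableEq κ] [Field K]
    {A : Matrix κ κ K} (h : Fintype.card κ ≤ A.rank) : IsUnit A := by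
  rw [← mulVec_surjective_iff_isUnit, ← coe_mulVecLin, ← LinearMap.range_eq_top]
  refine Submodule.eq_top_of_finrank_eq (le_antisymm (Submodule.finrank_le _) ?_)
  rwa [Module.finrank_fintype_fun_eq_card]

theorem submatrix_swap_kronecker {ι κ R : Type*} [CommMagma R] (A : Matrix ι ι R)
    (B : Matrix κ κ R) : (A ⊗ₖ B).submatrix Prod.swap Prod.swap = B ⊗ₖ A := by
  ext p q
  exact mul_comm _ _

section Kernel

variable {ι κ R : Type*} [Fintype ι] [DecidableEq ι] [Fintype κ] [DecidableEq κ] [CommRing R]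

theorem kronecker_mulVec_eq_zero_iff_of_isUnit_right (A : Matrix ι ι R) {B : Matrix κ κ R}
    (hB : IsUnit B) (v : ι × κ → R) :
    (A ⊗ₖ B) *ᵥ v = 0 ↔ (A ⊗ₖ (1 : Matrix κ κ R)) *ᵥ v = 0 := by
  have hU : IsUnit ((1 : Matrix ι ι R) ⊗ₖ B) := by
    rw [isUnit_iff_isUnit_det, det_kronecker, det_one, one_pow, one_mul]
    exact ((isUnit_iff_isUnit_det B).mp hB).pow _
  have hAB : A ⊗ₖ B = (1 ⊗ₖ B) * (A ⊗ₖ 1) := by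
    rw [← mul_kronecker_mul, Matrix.one_mul, Matrix.mul_one]
  rw [hAB, ← mulVec_mulVec, (mulVec_injective_of_isUnit hU).eq_iff' (mulVec_zero _)]

theorem kronecker_mulVec_eq_zero_iff_of_isUnit_left (A : Matrix κ κ R) {B : Matrix ι ι R}
    (hB : IsUnit B) (v : ι × κ → R) :
    (B ⊗ₖ A) *ᵥ v = 0 ↔ ((1 : Matrix ι ι R) ⊗ₖ A) *ᵥ v = 0 := by
  have hU : IsUnit (B ⊗ₖ (1 : Matrix κ κ R)) := by
    rw [isUnit_iff_isUnit_det, det_kronecker, det_one, one_pow, mul_one]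
    exact ((isUnit_iff_isUnit_det B).mp hB).pow _
  have hAB : B ⊗ₖ A = (B ⊗ₖ 1) * (1 ⊗ₖ A) := by
    rw [← mul_kronecker_mul, Matrix.one_mul, Matrix.mul_one]
  rw [hAB, ← mulVec_mulVec, (mulVec_injective_of_isUnit hU).eq_iff' (mulVec_zero _)]

end Kernel

def tensorLeft {ι R : Type*} [Zero R] (φ : ι → R) (κ : Type*) [DecidableEq κ] :
    Matrix (ι × κ) κ R :=
  of fun p l => if p.2 = l then φ p.1 else 0

section TensorLeft

variable {ι κ R : Type*} [Fintype κ] [DecidableEq κ] [CommRing R] [StarRing R]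

theorem tensorLeft_mul_mul_conjTranspose (φ : ι → R) (η : Matrix κ κ R) :
    tensorLeft φ κ * η * (tensorLeft φ κ)ᴴ = vecMulVec φ (star φ) ⊗ₖ η := by
  ext ⟨i, j⟩ ⟨k, l⟩
  simp [tensorLeft, mul_apply, vecMulVec_apply, apply_ite (star : R → R), mul_right_comm]

theorem tensorLeft_mul_conjTranspose_mul_of_cols [Fintype ι] {φ : ι → R}
    (hφ : star φ ⬝ᵥ φ = 1) {h : Matrix (ι × κ) (ι × κ) R}
    (hcols : ∀ q, ∃ y : κ → R, ∀ i j, h (i, j) q = φ i * y j) :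
    tensorLeft φ κ * (tensorLeft φ κ)ᴴ * h = h := by
  ext ⟨i, j⟩ q
  obtain ⟨y, hy⟩ := hcols q
  have hφ' : ∑ i, star (φ i) * φ i = 1 := hφ
  calc (tensorLeft φ κ * (tensorLeft φ κ)ᴴ * h) (i, j) q
      = φ i * (∑ k, star (φ k) * φ k) * y j := by
        simp [tensorLeft, mul_apply, Fintype.sum_prod_type, hy, apply_ite (star : R → R),
          Finset.mul_sum, Finset.sum_mul, mul_assoc, mul_left_comm]
    _ = h (i, j) q := by rw [hφ', mul_one, hy]

end TensorLeft

section RCLike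

variable {ι κ 𝕜 : Type*} [Fintype ι] [Fintype κ] [DecidableEq κ] [RCLike 𝕜]

theorem exists_posDef_eq_kronecker_of_cols {h : Matrix (ι × κ) (ι × κ) 𝕜}
    (hpsd : h.PosSemidef) (hrank : h.rank = Fintype.card κ) {φ : ι → 𝕜}
    (hφ : star φ ⬝ᵥ φ = 1) (hcols : ∀ q, ∃ y : κ → 𝕜, ∀ i j, h (i, j) q = φ i * y j) :
    ∃ η : Matrix κ κ 𝕜, η.PosDef ∧ h = vecMulVec φ (star φ) ⊗ₖ η := by
  set V := tensorLeft φ κ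
  have hleft : V * Vᴴ * h = h := tensorLeft_mul_conjTranspose_mul_of_cols hφ hcols
  have hright : h * (V * Vᴴ) = h := by
    simpa [Matrix.mul_assoc, conjTranspose_mul, hpsd.isHermitian.eq] using
      congrArg conjTranspose hleft
  have hh : h = V * (Vᴴ * h * V) * Vᴴ := by
    calc h = V * Vᴴ * h * (V * Vᴴ) := by rw [hleft, hright]
      _ = _ := by simp only [Matrix.mul_assoc]
  refine ⟨Vᴴ * h * V, (hpsd.conjTranspose_mul_mul_same V).posDef_iff_isUnit.mpr
    (isUnit_of_card_le_rank ?_), ?_⟩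
  · calc Fintype.card κ = (V * (Vᴴ * h * V) * Vᴴ).rank := by rw [← hh, hrank]
      _ ≤ (V * (Vᴴ * h * V)).rank := rank_mul_le_left _ _
      _ ≤ (Vᴴ * h * V).rank := rank_mul_le_right _ _
  · rw [← tensorLeft_mul_mul_conjTranspose]
    exact hh

theorem exists_posDef_eq_kronecker_of_left_factor [DecidableEq ι] [Nonempty κ]
    {h : Matrix (ι × κ) (ι × κ) 𝕜} (hpsd : h.PosSemidef) (hrank : h.rank = Fintype.card κ)
    {x : ι → 𝕜} (hrange : ∀ w, ∃ y : κ → 𝕜, ∀ i j, (h *ᵥ w) (i, j) = x i * y j) :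
    ∃ (φ : ι → 𝕜) (η : Matrix κ κ 𝕜),
      star φ ⬝ᵥ φ = 1 ∧ η.PosDef ∧ h = vecMulVec φ (star φ) ⊗ₖ η := by
  have hcols : ∀ q, ∃ y : κ → 𝕜, ∀ i j, h (i, j) q = x i * y j := fun q => by
    simpa [mulVec_single_one] using hrange (Pi.single q 1)
  have hx : x ≠ 0 := by
    rintro rfl
    have h0 : h = 0 := by
      ext ⟨i, j⟩ q
      obtain ⟨y, hy⟩ := hcols q
      simp [hy]
    rw [h0, rank_zero] at hrank
    exact Fintype.card_ne_zero hrank.symm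
  obtain ⟨c, φ, hφ, rfl⟩ := exists_eq_smul_unit_of_ne_zero hx
  obtain ⟨η, hη, hh⟩ := exists_posDef_eq_kronecker_of_cols hpsd hrank hφ fun q => by
    obtain ⟨y, hy⟩ := hcols q
    exact ⟨c • y, fun i j => by simp only [hy, Pi.smul_apply, smul_eq_mul]; ring⟩
  exact ⟨φ, η, hφ, hη, hh⟩

theorem exists_posDef_eq_kronecker_of_right_factor [DecidableEq ι] [Nonempty ι]
    {h : Matrix (ι × κ) (ι × κ) 𝕜} (hpsd : h.PosSemidef) (hrank : h.rank = Fintype.card ι)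
    {y : κ → 𝕜} (hrange : ∀ w, ∃ x : ι → 𝕜, ∀ i j, (h *ᵥ w) (i, j) = x i * y j) :
    ∃ (φ : κ → 𝕜) (η : Matrix ι ι 𝕜),
      star φ ⬝ᵥ φ = 1 ∧ η.PosDef ∧ h = η ⊗ₖ vecMulVec φ (star φ) := by
  let e := Equiv.prodComm κ ι
  obtain ⟨φ, η, hφ, hη, hh⟩ := exists_posDef_eq_kronecker_of_left_factor (hpsd.submatrix e)
    (by rwa [rank_submatrix]) (x := y) fun w => by
      obtain ⟨x, hx⟩ := hrange (w ∘ e.symm)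
      refine ⟨x, fun j i => ?_⟩
      rw [submatrix_mulVec_equiv, Function.comp_apply, mul_comm]
      exact hx i j
  refine ⟨φ, η, hφ, hη, ?_⟩
  rw [← submatrix_swap_kronecker, ← hh]
  rfl

end RCLike

end Matrix

theorem Complex.ofReal_sum_normSq {ι : Type*} [Fintype ι] (φ : ι → ℂ) :
    ((∑ i, Complex.normSq (φ i) : ℝ) : ℂ) = star φ ⬝ᵥ φ := by
  simp [dotProduct, Complex.normSq_eq_conj_mul_self]

theorem stmt17_general (h : Matrix (Fin 2 × Fin 2) (Fin 2 × Fin 2) ℂ)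
    (hpsd : h.PosSemidef) (hrank : h.rank = 2)
    (hnoent : ∀ v : Fin 2 × Fin 2 → ℂ, (∃ w, h.mulVec w = v) →
      ∃ x y : Fin 2 → ℂ, ∀ i j : Fin 2, v (i, j) = x i * y j) :
    ∃ (φ : Fin 2 → ℂ) (η : Matrix (Fin 2) (Fin 2) ℂ),
      (∑ i : Fin 2, Complex.normSq (φ i)) = 1 ∧ η.PosDef ∧
      (((∀ i j k l : Fin 2, h (i, j) (k, l) = (φ i * star (φ k)) * η j l) ∧
        (∀ v : Fin 2 × Fin 2 → ℂ, h.mulVec v = 0 ↔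
          (Matrix.of fun p q : Fin 2 × Fin 2 =>
            (φ p.1 * star (φ q.1)) * (if p.2 = q.2 then (1 : ℂ) else 0)).mulVec v = 0)) ∨
       ((∀ i j k l : Fin 2, h (i, j) (k, l) = η i k * (φ j * star (φ l))) ∧
        (∀ v : Fin 2 × Fin 2 → ℂ, h.mulVec v = 0 ↔
          (Matrix.of fun p q : Fin 2 × Fin 2 =>
            (if p.1 = q.1 then (1 : ℂ) else 0) * (φ p.2 * star (φ q.2))).mulVec v = 0))) := by
  have hrank' : h.rank = Fintype.card (Fin 2) := hrank
  have hunit (φ : Fin 2 → ℂ) (hφ : star φ ⬝ᵥ φ = 1) : ∑ i, Complex.normSq (φ i) = 1 := by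
    exact_mod_cast (Complex.ofReal_sum_normSq φ).trans hφ
  rcases (LinearMap.range h.mulVecLin).toAddSubmonoid.exists_common_left_or_right_factor
    (fun v hv => hnoent v hv) with ⟨x, hx⟩ | ⟨y, hy⟩
  · obtain ⟨φ, η, hφ, hη, rfl⟩ :=
      exists_posDef_eq_kronecker_of_left_factor hpsd hrank' fun w => hx _ ⟨w, rfl⟩
    exact ⟨φ, η, hunit φ hφ, hη,
      Or.inl ⟨fun _ _ _ _ => rfl, kronecker_mulVec_eq_zero_iff_of_isUnit_right _ hη.isUnit⟩⟩
  · obtain ⟨φ, η, hφ, hη, rfl⟩ :=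
      exists_posDef_eq_kronecker_of_right_factor hpsd hrank' fun w => hy _ ⟨w, rfl⟩
    exact ⟨φ, η, hunit φ hφ, hη,
      Or.inr ⟨fun _ _ _ _ => rfl, kronecker_mulVec_eq_zero_iff_of_isUnit_left _ hη.isUnit⟩⟩

/-- Let `h` be a Hermitian positive semidefinite operator on `ℂ²⊗ℂ²` of rank 2 with
nontrivial kernel whose image contains no entangled vector.  Then
`h = |φ⟩⟨φ| ⊗ η` or `h = η ⊗ |φ⟩⟨φ|` for a unit vector `φ ∈ ℂ²` and positive definite
`η` on `ℂ²`; in particular `ker h = ker (|φ⟩⟨φ| ⊗ 1)` (resp. `ker (1 ⊗ |φ⟩⟨φ|)`). -/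
theorem stmt17 (h : Matrix (Fin 2 × Fin 2) (Fin 2 × Fin 2) ℂ)
    (hherm : h.IsHermitian) (hpsd : h.PosSemidef) (hrank : h.rank = 2)
    (hker : ∃ v : Fin 2 × Fin 2 → ℂ, v ≠ 0 ∧ h.mulVec v = 0)
    (hnoent : ∀ v : Fin 2 × Fin 2 → ℂ, (∃ w, h.mulVec w = v) →
      ∃ x y : Fin 2 → ℂ, ∀ i j : Fin 2, v (i, j) = x i * y j) :
    ∃ (φ : Fin 2 → ℂ) (η : Matrix (Fin 2) (Fin 2) ℂ),
      (∑ i : Fin 2, Complex.normSq (φ i)) = 1 ∧ η.PosDef ∧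
      (((∀ i j k l : Fin 2, h (i, j) (k, l) = (φ i * star (φ k)) * η j l) ∧
        (∀ v : Fin 2 × Fin 2 → ℂ, h.mulVec v = 0 ↔
          (Matrix.of fun p q : Fin 2 × Fin 2 =>
            (φ p.1 * star (φ q.1)) * (if p.2 = q.2 then (1 : ℂ) else 0)).mulVec v = 0)) ∨
       ((∀ i j k l : Fin 2, h (i, j) (k, l) = η i k * (φ j * star (φ l))) ∧
        (∀ v : Fin 2 × Fin 2 → ℂ, h.mulVec v = 0 ↔
          (Matrix.of fun p q : Fin 2 × Fin 2 =>
            (if p.1 = q.1 then (1 : ℂ) else 0) * (φ p.2 * star (φ q.2))).mulVec v = 0))) :=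
  stmt17_general h hpsd hrank hnoent
end
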